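/- arXiv:2110.04901 — 7 statements merged into one kernel-verified Lean document; each statement's English description precedes it below -/
import Mathlib

section
/- Let (η, ζ) be a solution of the conformal water-wave system with parameters γ, α. For x ∈ ℝ define the flow force S(x) = (1/2)·∫₀¹ [η_y(ζ_y² − ζ_x²) + 2η_x ζ_x ζ_y]/(η_x² + η_y²) (x,y) dy − [ (γ²/6)·η(x,1)³ + (α/2)·η(x,1)² − ((2α+1)/2)·η(x,1) ]. Then S is independent of x, i.e. S(x) = S(x′) for all x, x′ ∈ ℝ. -/
noncomputable section

open Real MeasureTheory intervalIntegral

/-- Partial derivative in the horizontal variable. -/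
noncomputable def px (f : ℝ × ℝ → ℝ) (p : ℝ × ℝ) : ℝ := fderiv ℝ f p (1, 0)

/-- Partial derivative in the vertical variable. -/
noncomputable def py (f : ℝ × ℝ → ℝ) (p : ℝ × ℝ) : ℝ := fderiv ℝ f p (0, 1)

/-- The open horizontal strip `ℝ × (0,1)`. -/
def stripR : Set (ℝ × ℝ) := {p : ℝ × ℝ | 0 < p.2 ∧ p.2 < 1}

lemma contDiff_px {f : ℝ × ℝ → ℝ} (hf : ContDiff ℝ 3 f) : ContDiff ℝ 2 (px f) :=
  (hf.fderiv_right (by norm_num)).clm_apply contDiff_const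

lemma contDiff_py {f : ℝ × ℝ → ℝ} (hf : ContDiff ℝ 3 f) : ContDiff ℝ 2 (py f) :=
  (hf.fderiv_right (by norm_num)).clm_apply contDiff_const

lemma hasDerivAt_slice_x {f : ℝ × ℝ → ℝ} {p : ℝ × ℝ} (hf : DifferentiableAt ℝ f p) :
    HasDerivAt (fun t => f (t, p.2)) (px f p) p.1 := by
  have hg : HasDerivAt (fun t : ℝ => (t, p.2)) ((1 : ℝ), (0 : ℝ)) p.1 :=
    (hasDerivAt_id p.1).prodMk (hasDerivAt_const p.1 p.2)
  have := hf.hasFDerivAt.comp_hasDerivAt p.1 (by simpa using hg)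
  exact this

lemma hasDerivAt_slice_y {f : ℝ × ℝ → ℝ} {p : ℝ × ℝ} (hf : DifferentiableAt ℝ f p) :
    HasDerivAt (fun t => f (p.1, t)) (py f p) p.2 := by
  have hg : HasDerivAt (fun t : ℝ => (p.1, t)) ((0 : ℝ), (1 : ℝ)) p.2 :=
    (hasDerivAt_const p.2 p.1).prodMk (hasDerivAt_id p.2)
  have := hf.hasFDerivAt.comp_hasDerivAt p.2 (by simpa using hg)
  exact this

lemma px_py_symm {f : ℝ × ℝ → ℝ} (hf : ContDiff ℝ 3 f) (p : ℝ × ℝ) :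
    px (py f) p = py (px f) p := by
  have hdf : DifferentiableAt ℝ (fderiv ℝ f) p :=
    ((hf.fderiv_right (m := 2) (by norm_num)).differentiable (by norm_num)) p
  have e1 : fderiv ℝ (py f) p
      = (fderiv ℝ f p).comp (fderiv ℝ (fun _ : ℝ × ℝ => ((0:ℝ), (1:ℝ))) p)
        + (fderiv ℝ (fderiv ℝ f) p).flip ((0:ℝ), (1:ℝ)) :=
    fderiv_clm_apply hdf (differentiableAt_const _)
  have e2 : fderiv ℝ (px f) p
      = (fderiv ℝ f p).comp (fderiv ℝ (fun _ : ℝ × ℝ => ((1:ℝ), (0:ℝ))) p)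
        + (fderiv ℝ (fderiv ℝ f) p).flip ((1:ℝ), (0:ℝ)) :=
    fderiv_clm_apply hdf (differentiableAt_const _)
  have h1 : px (py f) p = fderiv ℝ (fderiv ℝ f) p (1, 0) (0, 1) := by
    simp [px, e1]
  have h2 : py (px f) p = fderiv ℝ (fderiv ℝ f) p (0, 1) (1, 0) := by
    simp [py, e2]
  rw [h1, h2, (hf.contDiffAt.isSymmSndFDerivAt (by norm_num)).eq]

/-- The integrand of the flow force. -/
noncomputable def WWQ (η ζ : ℝ × ℝ → ℝ) (p : ℝ × ℝ) : ℝ :=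
  (py η p * ((py ζ p) ^ 2 - (px ζ p) ^ 2) + 2 * px η p * px ζ p * py ζ p)
    / ((px η p) ^ 2 + (py η p) ^ 2)

/-- The conjugate quantity. -/
noncomputable def WWP (η ζ : ℝ × ℝ → ℝ) (p : ℝ × ℝ) : ℝ :=
  (((px ζ p) ^ 2 - (py ζ p) ^ 2) * px η p + 2 * px ζ p * py ζ p * py η p)
    / ((px η p) ^ 2 + (py η p) ^ 2)

lemma hasDerivAt_slice_x' {f : ℝ × ℝ → ℝ} {x y : ℝ} (hf : DifferentiableAt ℝ f (x, y)) :
    HasDerivAt (fun t => f (t, y)) (px f (x, y)) x := by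
  simpa using hasDerivAt_slice_x (p := (x, y)) hf

lemma hasDerivAt_slice_y' {f : ℝ × ℝ → ℝ} {x y : ℝ} (hf : DifferentiableAt ℝ f (x, y)) :
    HasDerivAt (fun t => f (x, t)) (py f (x, y)) y := by
  simpa using hasDerivAt_slice_y (p := (x, y)) hf

lemma contDiffAt_WWQ_num {η ζ : ℝ × ℝ → ℝ} (hη : ContDiff ℝ 3 η) (hζ : ContDiff ℝ 3 ζ)
    (q : ℝ × ℝ) :
    ContDiffAt ℝ 2 (fun p => py η p * ((py ζ p) ^ 2 - (px ζ p) ^ 2)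
      + 2 * px η p * px ζ p * py ζ p) q := by
  have ca : ContDiffAt ℝ 2 (px η) q := (contDiff_px hη).contDiffAt
  have cb : ContDiffAt ℝ 2 (py η) q := (contDiff_py hη).contDiffAt
  have cu : ContDiffAt ℝ 2 (px ζ) q := (contDiff_px hζ).contDiffAt
  have cv : ContDiffAt ℝ 2 (py ζ) q := (contDiff_py hζ).contDiffAt
  exact (cb.mul ((cv.pow 2).sub (cu.pow 2))).add (((contDiffAt_const.mul ca).mul cu).mul cv)

lemma contDiffAt_WWP_num {η ζ : ℝ × ℝ → ℝ} (hη : ContDiff ℝ 3 η) (hζ : ContDiff ℝ 3 ζ)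
    (q : ℝ × ℝ) :
    ContDiffAt ℝ 2 (fun p => ((px ζ p) ^ 2 - (py ζ p) ^ 2) * px η p
      + 2 * px ζ p * py ζ p * py η p) q := by
  have ca : ContDiffAt ℝ 2 (px η) q := (contDiff_px hη).contDiffAt
  have cb : ContDiffAt ℝ 2 (py η) q := (contDiff_py hη).contDiffAt
  have cu : ContDiffAt ℝ 2 (px ζ) q := (contDiff_px hζ).contDiffAt
  have cv : ContDiffAt ℝ 2 (py ζ) q := (contDiff_py hζ).contDiffAt
  exact ((((cu.pow 2).sub (cv.pow 2)).mul ca)).add (((contDiffAt_const.mul cu).mul cv).mul cb)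

lemma contDiffAt_WWD {η : ℝ × ℝ → ℝ} (hη : ContDiff ℝ 3 η) (q : ℝ × ℝ) :
    ContDiffAt ℝ 2 (fun p => (px η p) ^ 2 + (py η p) ^ 2) q :=
  (((contDiff_px hη).contDiffAt.pow 2)).add ((contDiff_py hη).contDiffAt.pow 2)

lemma contDiffAt_WWQ {η ζ : ℝ × ℝ → ℝ} (hη : ContDiff ℝ 3 η) (hζ : ContDiff ℝ 3 ζ)
    {q : ℝ × ℝ} (hD : (px η q) ^ 2 + (py η q) ^ 2 ≠ 0) :
    ContDiffAt ℝ 2 (WWQ η ζ) q :=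
  (contDiffAt_WWQ_num hη hζ q).div (contDiffAt_WWD hη q) hD

lemma contDiffAt_WWP {η ζ : ℝ × ℝ → ℝ} (hη : ContDiff ℝ 3 η) (hζ : ContDiff ℝ 3 ζ)
    {q : ℝ × ℝ} (hD : (px η q) ^ 2 + (py η q) ^ 2 ≠ 0) :
    ContDiffAt ℝ 2 (WWP η ζ) q :=
  (contDiffAt_WWP_num hη hζ q).div (contDiffAt_WWD hη q) hD

lemma diff_WWQ {η ζ : ℝ × ℝ → ℝ} (hη : ContDiff ℝ 3 η) (hζ : ContDiff ℝ 3 ζ)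
    {q : ℝ × ℝ} (hD : (px η q) ^ 2 + (py η q) ^ 2 ≠ 0) :
    DifferentiableAt ℝ (WWQ η ζ) q :=
  (contDiffAt_WWQ hη hζ hD).differentiableAt (by norm_num)

lemma diff_WWP {η ζ : ℝ × ℝ → ℝ} (hη : ContDiff ℝ 3 η) (hζ : ContDiff ℝ 3 ζ)
    {q : ℝ × ℝ} (hD : (px η q) ^ 2 + (py η q) ^ 2 ≠ 0) :
    DifferentiableAt ℝ (WWP η ζ) q :=
  (contDiffAt_WWP hη hζ hD).differentiableAt (by norm_num)

lemma key_identity {η ζ : ℝ × ℝ → ℝ} (hη : ContDiff ℝ 3 η) (hζ : ContDiff ℝ 3 ζ) (x y : ℝ)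
    (hD : (px η (x, y)) ^ 2 + (py η (x, y)) ^ 2 ≠ 0)
    (hhη : px (px η) (x, y) + py (py η) (x, y) = 0)
    (hhζ : px (px ζ) (x, y) + py (py ζ) (x, y) = 0) :
    px (WWQ η ζ) (x, y) = py (WWP η ζ) (x, y) := by
  have da : DifferentiableAt ℝ (px η) (x, y) := ((contDiff_px hη).differentiable (by norm_num)) _
  have db : DifferentiableAt ℝ (py η) (x, y) := ((contDiff_py hη).differentiable (by norm_num)) _
  have du : DifferentiableAt ℝ (px ζ) (x, y) := ((contDiff_px hζ).differentiable (by norm_num)) _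
  have dv : DifferentiableAt ℝ (py ζ) (x, y) := ((contDiff_py hζ).differentiable (by norm_num)) _
  have hQdiff : DifferentiableAt ℝ (WWQ η ζ) (x, y) := diff_WWQ hη hζ hD
  have hPdiff : DifferentiableAt ℝ (WWP η ζ) (x, y) := diff_WWP hη hζ hD
  -- x-derivatives of the atoms
  have ha := hasDerivAt_slice_x' da
  have hb := hasDerivAt_slice_x' db
  have hu := hasDerivAt_slice_x' du
  have hv := hasDerivAt_slice_x' dv
  have hQx' := HasDerivAt.div (𝕜 := ℝ) (d := fun t => (px η (t, y)) ^ 2 + (py η (t, y)) ^ 2)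
    ((hb.fun_mul ((hv.fun_pow 2).fun_sub (hu.fun_pow 2))).fun_add
      (((ha.const_mul 2).fun_mul hu).fun_mul hv))
    ((ha.fun_pow 2).fun_add (hb.fun_pow 2)) hD
  have e1 := (hasDerivAt_slice_x' hQdiff).unique hQx'
  -- y-derivatives of the atoms
  have ha' := hasDerivAt_slice_y' da
  have hb' := hasDerivAt_slice_y' db
  have hu' := hasDerivAt_slice_y' du
  have hv' := hasDerivAt_slice_y' dv
  have hPy' := HasDerivAt.div (𝕜 := ℝ) (d := fun t => (px η (x, t)) ^ 2 + (py η (x, t)) ^ 2)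
    ((((hu'.fun_pow 2).fun_sub (hv'.fun_pow 2)).fun_mul ha').fun_add
      (((hu'.const_mul 2).fun_mul hv').fun_mul hb'))
    ((ha'.fun_pow 2).fun_add (hb'.fun_pow 2)) hD
  have e2 := (hasDerivAt_slice_y' hPdiff).unique hPy'
  rw [e1, e2]
  have r1 : py (py η) (x, y) = -px (px η) (x, y) := by linarith
  have r2 : py (py ζ) (x, y) = -px (px ζ) (x, y) := by linarith
  rw [px_py_symm hη, px_py_symm hζ] at *
  rw [r1, r2]
  field_simp
  ring

lemma isOpen_WWU {η : ℝ × ℝ → ℝ} (hη : ContDiff ℝ 3 η) :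
    IsOpen {q : ℝ × ℝ | (px η q) ^ 2 + (py η q) ^ 2 ≠ 0} := by
  have hc : Continuous (fun q : ℝ × ℝ => (px η q) ^ 2 + (py η q) ^ 2) :=
    (((contDiff_px hη).continuous.pow 2)).add ((contDiff_py hη).continuous.pow 2)
  exact hc.isOpen_preimage {0}ᶜ isOpen_compl_singleton

lemma continuousOn_WWQ {η ζ : ℝ × ℝ → ℝ} (hη : ContDiff ℝ 3 η) (hζ : ContDiff ℝ 3 ζ) :
    ContinuousOn (WWQ η ζ) {q : ℝ × ℝ | (px η q) ^ 2 + (py η q) ^ 2 ≠ 0} :=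
  fun q hq => ((contDiffAt_WWQ hη hζ hq).continuousAt).continuousWithinAt

lemma continuousOn_WWP {η ζ : ℝ × ℝ → ℝ} (hη : ContDiff ℝ 3 η) (hζ : ContDiff ℝ 3 ζ) :
    ContinuousOn (WWP η ζ) {q : ℝ × ℝ | (px η q) ^ 2 + (py η q) ^ 2 ≠ 0} :=
  fun q hq => ((contDiffAt_WWP hη hζ hq).continuousAt).continuousWithinAt

lemma continuousOn_px_WWQ {η ζ : ℝ × ℝ → ℝ} (hη : ContDiff ℝ 3 η) (hζ : ContDiff ℝ 3 ζ) :
    ContinuousOn (px (WWQ η ζ)) {q : ℝ × ℝ | (px η q) ^ 2 + (py η q) ^ 2 ≠ 0} := by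
  have hQ : ContDiffOn ℝ 2 (WWQ η ζ) {q : ℝ × ℝ | (px η q) ^ 2 + (py η q) ^ 2 ≠ 0} :=
    fun q hq => (contDiffAt_WWQ hη hζ hq).contDiffWithinAt
  have hfd : ContinuousOn (fderiv ℝ (WWQ η ζ))
      {q : ℝ × ℝ | (px η q) ^ 2 + (py η q) ^ 2 ≠ 0} :=
    hQ.continuousOn_fderiv_of_isOpen (isOpen_WWU hη) (by norm_num)
  exact (ContinuousLinearMap.apply ℝ ℝ ((1:ℝ), (0:ℝ))).continuous.comp_continuousOn hfd

lemma D_pos {α : ℝ} {η : ℝ × ℝ → ℝ} (hη : ContDiff ℝ 3 η)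
    (hnd : ∃ c > 0, ∀ p ∈ stripR,
      c ≤ (1 - 2 * α * (η p - 1)) ^ 2 * ((px η p) ^ 2 + (py η p) ^ 2)) :
    ∀ p : ℝ × ℝ, p.2 ∈ Set.Icc (0:ℝ) 1 → 0 < (px η p) ^ 2 + (py η p) ^ 2 := by
  obtain ⟨c, hc, hnd⟩ := hnd
  intro p hp
  have h1 : Continuous η := hη.continuous
  have h2 := (contDiff_px hη).continuous
  have h3 := (contDiff_py hη).continuous
  have hline : Continuous (fun t : ℝ => (p.1, t)) := continuous_const.prodMk continuous_id
  have hcontg : Continuous (fun t : ℝ => (1 - 2 * α * (η (p.1, t) - 1)) ^ 2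
      * ((px η (p.1, t)) ^ 2 + (py η (p.1, t)) ^ 2)) :=
    (((continuous_const.sub (continuous_const.mul
      ((h1.comp hline).sub continuous_const))).pow 2).mul
      (((h2.comp hline).pow 2).add ((h3.comp hline).pow 2)))
  have hclosed : IsClosed {t : ℝ | c ≤ (1 - 2 * α * (η (p.1, t) - 1)) ^ 2
      * ((px η (p.1, t)) ^ 2 + (py η (p.1, t)) ^ 2)} :=
    isClosed_le continuous_const hcontg
  have hsub : Set.Ioo (0:ℝ) 1 ⊆ {t : ℝ | c ≤ (1 - 2 * α * (η (p.1, t) - 1)) ^ 2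
      * ((px η (p.1, t)) ^ 2 + (py η (p.1, t)) ^ 2)} :=
    fun t ht => hnd (p.1, t) ⟨ht.1, ht.2⟩
  have hsub2 : Set.Icc (0:ℝ) 1 ⊆ {t : ℝ | c ≤ (1 - 2 * α * (η (p.1, t) - 1)) ^ 2
      * ((px η (p.1, t)) ^ 2 + (py η (p.1, t)) ^ 2)} := by
    rw [← closure_Ioo (by norm_num : (0:ℝ) ≠ 1)]
    exact hclosed.closure_subset_iff.2 hsub
  have hcg := hsub2 hp
  simp only [Set.mem_setOf_eq, Prod.mk.eta] at hcg
  by_contra hle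
  push_neg at hle
  have hD0 : (px η p) ^ 2 + (py η p) ^ 2 ≤ 0 := hle
  have hK : (0:ℝ) ≤ (1 - 2 * α * (η p - 1)) ^ 2 := sq_nonneg _
  nlinarith [mul_nonpos_of_nonneg_of_nonpos hK hD0]

/-- A solution of the conformal water-wave system with dimensionless vorticity `γ`
and wave-speed parameter `α`. -/
structure IsWWSolution (γ α : ℝ) (η ζ : ℝ × ℝ → ℝ) : Prop where
  smooth_η : ContDiff ℝ 3 η
  smooth_ζ : ContDiff ℝ 3 ζ
  bdd : ∀ n : ℕ, n ≤ 3 → ∃ C : ℝ, ∀ p : ℝ × ℝ, p.2 ∈ Set.Icc (0:ℝ) 1 →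
    ‖iteratedFDeriv ℝ n η p‖ + ‖iteratedFDeriv ℝ n ζ p‖ ≤ C
  harm_η : ∀ p ∈ stripR, px (px η) p + py (py η) p = 0
  harm_ζ : ∀ p ∈ stripR, px (px ζ) p + py (py ζ) p = 0
  kinematic : ∀ x : ℝ, ζ (x, 1) = 1 - γ / 2 - (γ / 2) * (η (x, 1)) ^ 2
  dynamic : ∀ x : ℝ,
    (py ζ (x, 1) + γ * η (x, 1) * py η (x, 1)) ^ 2
      = (1 - 2 * α * (η (x, 1) - 1)) * ((px η (x, 1)) ^ 2 + (py η (x, 1)) ^ 2)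
  bottom_η : ∀ x : ℝ, η (x, 0) = 0
  bottom_ζ : ∀ x : ℝ, ζ (x, 0) = 0
  decay : ∀ n : ℕ, n ≤ 2 → ∀ ε > 0, ∃ M : ℝ, ∀ p : ℝ × ℝ,
    M ≤ |p.1| → p.2 ∈ Set.Icc (0:ℝ) 1 →
      ‖iteratedFDeriv ℝ n (fun q => η q - q.2) p‖
        + ‖iteratedFDeriv ℝ n (fun q => ζ q - (1 - γ) * q.2) p‖ ≤ ε
  nondeg : ∃ c > 0, ∀ p ∈ stripR,
    c ≤ (1 - 2 * α * (η p - 1)) ^ 2 * ((px η p) ^ 2 + (py η p) ^ 2)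

/-- The flow force of a solution of the conformal water-wave system is
independent of the horizontal variable. -/
theorem flow_force_independent_of_x (γ α : ℝ) (η ζ : ℝ × ℝ → ℝ)
    (hsol : IsWWSolution γ α η ζ) (S : ℝ → ℝ)
    (hS : ∀ x : ℝ, S x =
      (1 / 2) * (∫ y in (0:ℝ)..1,
        (py η (x, y) * ((py ζ (x, y)) ^ 2 - (px ζ (x, y)) ^ 2)
            + 2 * px η (x, y) * px ζ (x, y) * py ζ (x, y))
          / ((px η (x, y)) ^ 2 + (py η (x, y)) ^ 2))
      - ((γ ^ 2 / 6) * (η (x, 1)) ^ 3 + (α / 2) * (η (x, 1)) ^ 2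
          - ((2 * α + 1) / 2) * η (x, 1))) :
    ∀ x x' : ℝ, S x = S x' := by
  obtain ⟨hη, hζ, _, hharmη, hharmζ, hkin, hdyn, hbotη, hbotζ, _, hnd⟩ := hsol
  have hDpos := D_pos hη hnd
  have hband : ∀ q : ℝ × ℝ, q.2 ∈ Set.Icc (0:ℝ) 1 → (px η q) ^ 2 + (py η q) ^ 2 ≠ 0 :=
    fun q hq => ne_of_gt (hDpos q hq)
  have hηdiff : ∀ q : ℝ × ℝ, DifferentiableAt ℝ η q := fun q => (hη.differentiable (by norm_num)) q
  have hζdiff : ∀ q : ℝ × ℝ, DifferentiableAt ℝ ζ q := fun q => (hζ.differentiable (by norm_num)) q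
  -- bottom boundary values of the horizontal derivatives
  have habot : ∀ t : ℝ, px η (t, 0) = 0 := by
    intro t
    have h1 : HasDerivAt (fun s => η (s, 0)) (px η (t, 0)) t := hasDerivAt_slice_x' (hηdiff _)
    have h2 : (fun s : ℝ => η (s, 0)) = fun _ => (0:ℝ) := funext hbotη
    rw [h2] at h1
    exact h1.unique (hasDerivAt_const t 0)
  have hubot : ∀ t : ℝ, px ζ (t, 0) = 0 := by
    intro t
    have h1 : HasDerivAt (fun s => ζ (s, 0)) (px ζ (t, 0)) t := hasDerivAt_slice_x' (hζdiff _)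
    have h2 : (fun s : ℝ => ζ (s, 0)) = fun _ => (0:ℝ) := funext hbotζ
    rw [h2] at h1
    exact h1.unique (hasDerivAt_const t 0)
  have hP0 : ∀ t : ℝ, WWP η ζ (t, 0) = 0 := by
    intro t
    rw [WWP, habot t, hubot t]
    norm_num
  -- top boundary
  have hetop : ∀ t : ℝ, HasDerivAt (fun s => η (s, 1)) (px η (t, 1)) t :=
    fun t => hasDerivAt_slice_x' (hηdiff _)
  have hutop : ∀ t : ℝ, px ζ (t, 1) = -(γ * η (t, 1) * px η (t, 1)) := by
    intro t
    have h1 : HasDerivAt (fun s => ζ (s, 1)) (px ζ (t, 1)) t := hasDerivAt_slice_x' (hζdiff _)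
    have h2 : (fun s : ℝ => ζ (s, 1)) = fun s => 1 - γ / 2 - (γ / 2) * (η (s, 1)) ^ 2 :=
      funext hkin
    rw [h2] at h1
    have h3 : HasDerivAt (fun s : ℝ => 1 - γ / 2 - (γ / 2) * (η (s, 1)) ^ 2)
        (-(γ * η (t, 1) * px η (t, 1))) t := by
      have h4 := (hasDerivAt_const t (1 - γ / 2)).fun_sub (((hetop t).fun_pow 2).const_mul (γ / 2))
      exact h4.congr_deriv (by ring)
    exact h1.unique h3
  have hP1 : ∀ t : ℝ, WWP η ζ (t, 1)
      = (γ ^ 2 * (η (t, 1)) ^ 2 + 2 * α * η (t, 1) - 2 * α - 1) * px η (t, 1) := by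
    intro t
    have hD : (px η (t, 1)) ^ 2 + (py η (t, 1)) ^ 2 ≠ 0 := hband (t, 1) (by norm_num)
    rw [WWP, hutop t, div_eq_iff hD]
    linear_combination (-(px η (t, 1))) * hdyn t
  -- derivative of the boundary term
  have hTderiv : ∀ t : ℝ, HasDerivAt
      (fun s => (γ ^ 2 / 6) * (η (s, 1)) ^ 3 + (α / 2) * (η (s, 1)) ^ 2
        - ((2 * α + 1) / 2) * η (s, 1))
      ((γ ^ 2 * (η (t, 1)) ^ 2 + 2 * α * η (t, 1) - 2 * α - 1) / 2 * px η (t, 1)) t := by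
    intro t
    have h := ((((hetop t).fun_pow 3).const_mul (γ ^ 2 / 6)).fun_add
      (((hetop t).fun_pow 2).const_mul (α / 2))).fun_sub ((hetop t).const_mul ((2 * α + 1) / 2))
    exact h.congr_deriv (by ring)
  -- reduction of `S` to the integral of `WWQ`
  have hScomp : ∀ t : ℝ, S t = (1 / 2) * (∫ y in (0:ℝ)..1, WWQ η ζ (t, y))
      - ((γ ^ 2 / 6) * (η (t, 1)) ^ 3 + (α / 2) * (η (t, 1)) ^ 2
        - ((2 * α + 1) / 2) * η (t, 1)) := by
    intro t
    rw [hS t]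
    rfl
  suffices key : ∀ x x' : ℝ, x ≤ x' → S x = S x' by
    intro x x'
    rcases le_total x x' with h | h
    exacts [key _ _ h, (key _ _ h).symm]
  intro x x' hxx
  -- integrability of the various slices
  have hQslice_int : ∀ t : ℝ, IntervalIntegrable (fun y => WWQ η ζ (t, y)) volume 0 1 := by
    intro t
    apply ContinuousOn.intervalIntegrable
    rw [Set.uIcc_of_le zero_le_one]
    exact (continuousOn_WWQ hη hζ).comp
      ((continuous_const.prodMk continuous_id).continuousOn) (fun y hy => hband (t, y) hy)
  have hQx_slice_int_y : ∀ t : ℝ, IntervalIntegrable (fun y => px (WWQ η ζ) (t, y)) volume 0 1 := by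
    intro t
    apply ContinuousOn.intervalIntegrable
    rw [Set.uIcc_of_le zero_le_one]
    exact (continuousOn_px_WWQ hη hζ).comp
      ((continuous_const.prodMk continuous_id).continuousOn) (fun y hy => hband (t, y) hy)
  have hQx_slice_int_x : ∀ y ∈ Set.Icc (0:ℝ) 1,
      IntervalIntegrable (fun t => px (WWQ η ζ) (t, y)) volume x x' := by
    intro y hy
    apply ContinuousOn.intervalIntegrable
    exact (continuousOn_px_WWQ hη hζ).comp
      ((continuous_id.prodMk continuous_const).continuousOn) (fun t _ => hband (t, y) hy)
  -- FTC in the horizontal direction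
  have hQint : ∀ y ∈ Set.Icc (0:ℝ) 1, WWQ η ζ (x', y) - WWQ η ζ (x, y)
      = ∫ t in x..x', px (WWQ η ζ) (t, y) := by
    intro y hy
    exact (intervalIntegral.integral_eq_sub_of_hasDerivAt
      (fun t _ => hasDerivAt_slice_x' (diff_WWQ hη hζ (hband (t, y) hy)))
      (hQx_slice_int_x y hy)).symm
  have hIdiff : (∫ y in (0:ℝ)..1, WWQ η ζ (x', y)) - (∫ y in (0:ℝ)..1, WWQ η ζ (x, y))
      = ∫ y in (0:ℝ)..1, ∫ t in x..x', px (WWQ η ζ) (t, y) := by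
    rw [← intervalIntegral.integral_sub (hQslice_int x') (hQslice_int x)]
    apply intervalIntegral.integral_congr
    intro y hy
    rw [Set.uIcc_of_le zero_le_one] at hy
    exact hQint y hy
  -- Fubini
  have hswap : (∫ y in (0:ℝ)..1, ∫ t in x..x', px (WWQ η ζ) (t, y))
      = ∫ t in x..x', ∫ y in (0:ℝ)..1, px (WWQ η ζ) (t, y) := by
    rw [intervalIntegral.integral_of_le zero_le_one, intervalIntegral.integral_of_le hxx]
    simp_rw [intervalIntegral.integral_of_le zero_le_one, intervalIntegral.integral_of_le hxx]
    refine (MeasureTheory.integral_integral_swap ?_).symm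
    rw [Measure.prod_restrict]
    have hIcc : IntegrableOn (fun q : ℝ × ℝ => px (WWQ η ζ) q)
        (Set.Icc x x' ×ˢ Set.Icc (0:ℝ) 1) (volume.prod volume) := by
      rw [← MeasureTheory.Measure.volume_eq_prod]
      apply ContinuousOn.integrableOn_compact (isCompact_Icc.prod isCompact_Icc)
      exact (continuousOn_px_WWQ hη hζ).mono (fun q hq => hband q hq.2)
    have := hIcc.mono_set (Set.prod_mono Set.Ioc_subset_Icc_self Set.Ioc_subset_Icc_self)
    exact this
  -- FTC in the vertical direction
  have hinner : ∀ t : ℝ, (∫ y in (0:ℝ)..1, px (WWQ η ζ) (t, y))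
      = 2 * ((γ ^ 2 * (η (t, 1)) ^ 2 + 2 * α * η (t, 1) - 2 * α - 1) / 2 * px η (t, 1)) := by
    intro t
    have hcont : ContinuousOn (fun y => WWP η ζ (t, y)) (Set.Icc (0:ℝ) 1) :=
      (continuousOn_WWP hη hζ).comp
        ((continuous_const.prodMk continuous_id).continuousOn) (fun y hy => hband (t, y) hy)
    have hderiv : ∀ y ∈ Set.Ioo (0:ℝ) 1,
        HasDerivAt (fun s => WWP η ζ (t, s)) (px (WWQ η ζ) (t, y)) y := by
      intro y hy
      have h1 := hasDerivAt_slice_y' (diff_WWP hη hζ (hband (t, y) ⟨hy.1.le, hy.2.le⟩))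
      rwa [← key_identity hη hζ t y (hband (t, y) ⟨hy.1.le, hy.2.le⟩)
        (hharmη (t, y) ⟨hy.1, hy.2⟩) (hharmζ (t, y) ⟨hy.1, hy.2⟩)] at h1
    rw [intervalIntegral.integral_eq_sub_of_hasDerivAt_of_le zero_le_one hcont hderiv
      (hQx_slice_int_y t), hP1 t, hP0 t]
    ring
  -- final integration in the horizontal variable
  have hTfin : (∫ t in x..x',
        2 * ((γ ^ 2 * (η (t, 1)) ^ 2 + 2 * α * η (t, 1) - 2 * α - 1) / 2 * px η (t, 1)))
      = 2 * ((γ ^ 2 / 6) * (η (x', 1)) ^ 3 + (α / 2) * (η (x', 1)) ^ 2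
          - ((2 * α + 1) / 2) * η (x', 1))
        - 2 * ((γ ^ 2 / 6) * (η (x, 1)) ^ 3 + (α / 2) * (η (x, 1)) ^ 2
          - ((2 * α + 1) / 2) * η (x, 1)) := by
    have hint : IntervalIntegrable (fun t =>
        2 * ((γ ^ 2 * (η (t, 1)) ^ 2 + 2 * α * η (t, 1) - 2 * α - 1) / 2 * px η (t, 1)))
        volume x x' := by
      apply Continuous.intervalIntegrable
      have h1 : Continuous (fun t : ℝ => η (t, 1)) :=
        hη.continuous.comp (continuous_id.prodMk continuous_const)
      have h2 : Continuous (fun t : ℝ => px η (t, 1)) :=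
        (contDiff_px hη).continuous.comp (continuous_id.prodMk continuous_const)
      have hE : Continuous (fun t : ℝ =>
          γ ^ 2 * (η (t, 1)) ^ 2 + 2 * α * η (t, 1) - 2 * α - 1) :=
        (((continuous_const.mul (h1.pow 2)).add (continuous_const.mul h1)).sub
          continuous_const).sub continuous_const
      exact continuous_const.mul ((hE.div_const 2).mul h2)
    exact intervalIntegral.integral_eq_sub_of_hasDerivAt
      (fun t _ => ((hTderiv t).const_mul 2)) hint
  -- assemble
  have hmain : (∫ y in (0:ℝ)..1, WWQ η ζ (x', y)) - (∫ y in (0:ℝ)..1, WWQ η ζ (x, y))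
      = 2 * ((γ ^ 2 / 6) * (η (x', 1)) ^ 3 + (α / 2) * (η (x', 1)) ^ 2
          - ((2 * α + 1) / 2) * η (x', 1))
        - 2 * ((γ ^ 2 / 6) * (η (x, 1)) ^ 3 + (α / 2) * (η (x, 1)) ^ 2
          - ((2 * α + 1) / 2) * η (x, 1)) := by
    rw [hIdiff, hswap, ← hTfin]
    apply intervalIntegral.integral_congr
    intro t _
    exact hinner t
  rw [hScomp x, hScomp x']
  linarith
end
end

section
/- Let γ, α, η, η_x, η_y, ζ_x, ζ_y be real numbers with η_x² + η_y² ≠ 0, and suppose ζ_x = −γ·η·η_x (tangential derivative of the kinematic boundary condition) and (ζ_y + γ·η·η_y)² = (1 − 2α(η−1))·(η_x² + η_y²) (dynamic boundary condition). Then (1/2)·[2η_y ζ_x ζ_y − η_x(ζ_y² − ζ_x²)]/(η_x² + η_y²) = ( (γ²/2)·η² + α·η − (2α+1)/2 )·η_x. -/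
/-- Pointwise algebraic identity on the free surface: given the differentiated
kinematic condition and the dynamic boundary condition, the imaginary part of
`(ζ_y + iζ_x)²/(η_y + iη_x)` is an exact `x`-derivative. -/
theorem surface_identity (γ α η ηx ηy ζx ζy : ℝ)
    (hne : ηx ^ 2 + ηy ^ 2 ≠ 0)
    (hkin : ζx = -γ * η * ηx)
    (hdyn : (ζy + γ * η * ηy) ^ 2 = (1 - 2 * α * (η - 1)) * (ηx ^ 2 + ηy ^ 2)) :
    (1 / 2) * (2 * ηy * ζx * ζy - ηx * (ζy ^ 2 - ζx ^ 2)) / (ηx ^ 2 + ηy ^ 2)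
      = ((γ ^ 2 / 2) * η ^ 2 + α * η - (2 * α + 1) / 2) * ηx := by
  subst hkin
  field_simp
  linear_combination (-ηx) * hdyn
end

section
/- Fix γ, α ∈ ℝ. With Q̂(d) = (1/d²)·((2−γ)/2 + γd²/2)² + 2α(d−1) and the parameterized flow force Ŝ(d) = (2−γ)²/(8d) − γ²d³/24 − (2−γ)γd/4 + αd − αd²/2 + Q̂(1)·d/2 (where Q̂(1) = 1), one has Ŝ′(d) = (Q̂(1) − Q̂(d))/2 for all d > 0. Consequently, letting α_cr = 1 − γ and d* be the unique point with d* ≠ 1 and Q̂(d*) = Q̂(1) (which exists when α ≠ α_cr): if α < α_cr then Ŝ(d*) > Ŝ(1), and if α > α_cr then Ŝ(d*) < Ŝ(1). -/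
set_option maxHeartbeats 1000000 in

/-- The derivative of the parameterized flow force `Ŝ` satisfies
`Ŝ′(d) = (Q̂(1) − Q̂(d))/2`; consequently at the conjugate depth `d*` the flow
force differs from `Ŝ(1)` with a sign determined by `α − α_cr`. -/
theorem flow_force_derivative (γ α : ℝ) :
    let Q : ℝ → ℝ := fun d => (1 / d ^ 2) * ((2 - γ) / 2 + γ * d ^ 2 / 2) ^ 2 + 2 * α * (d - 1)
    let S : ℝ → ℝ := fun d => (2 - γ) ^ 2 / (8 * d) - γ ^ 2 * d ^ 3 / 24
      - (2 - γ) * γ * d / 4 + α * d - α * d ^ 2 / 2 + Q 1 * d / 2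
    let αcr : ℝ := 1 - γ
    (∀ d : ℝ, 0 < d → deriv S d = (Q 1 - Q d) / 2) ∧
    (∀ ds : ℝ, 0 < ds → ds ≠ 1 → Q ds = Q 1 →
      (α < αcr → S 1 < S ds) ∧ (αcr < α → S ds < S 1)) := by
  intro Q S αcr
  have hQ1 : Q 1 = 1 := by
    simp only [Q]
    rw [show ((2:ℝ) - γ) / 2 + γ * 1 ^ 2 / 2 = 1 from by ring]
    norm_num
  constructor
  · intro d hd
    have hd0 : d ≠ 0 := ne_of_gt hd
    have hfun : S = fun x : ℝ => (2 - γ) ^ 2 / 8 * x⁻¹ - γ ^ 2 / 24 * x ^ 3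
        - (2 - γ) * γ / 4 * x + α * x - α / 2 * x ^ 2 + Q 1 / 2 * x := by
      funext x
      simp only [S]
      ring
    have h2 : HasDerivAt (fun x : ℝ => x ^ 3) (3 * d ^ 2) d := by
      simpa using hasDerivAt_pow 3 d
    have h5 : HasDerivAt (fun x : ℝ => x ^ 2) (2 * d) d := by
      simpa using hasDerivAt_pow 2 d
    have h4 : HasDerivAt (fun x : ℝ => x) 1 d := hasDerivAt_id d
    have H : HasDerivAt S ((2 - γ) ^ 2 / 8 * (-(d ^ 2)⁻¹) - γ ^ 2 / 24 * (3 * d ^ 2)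
        - (2 - γ) * γ / 4 * 1 + α * 1 - α / 2 * (2 * d) + Q 1 / 2 * 1) d := by
      rw [hfun]
      exact ((((((hasDerivAt_inv hd0).const_mul ((2 - γ) ^ 2 / 8)).sub
        (h2.const_mul (γ ^ 2 / 24))).sub (h4.const_mul ((2 - γ) * γ / 4))).add
        (h4.const_mul α)).sub (h5.const_mul (α / 2))).add (h4.const_mul (Q 1 / 2))
    rw [H.deriv, hQ1]
    simp only [Q]
    field_simp
    ring
  · intro ds hds hne hQeq
    have hds0 : ds ≠ 0 := ne_of_gt hds
    rw [hQ1] at hQeq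
    simp only [Q] at hQeq
    have hkey : (ds - 1) * (8 * α * ds ^ 2 - (ds + 1) * (4 * (1 - γ) - γ ^ 2 * (ds ^ 2 - 1))) = 0 := by
      field_simp at hQeq
      nlinarith [hQeq]
    have hα : 8 * α * ds ^ 2 = (ds + 1) * (4 * (1 - γ) - γ ^ 2 * (ds ^ 2 - 1)) := by
      rcases mul_eq_zero.mp hkey with h | h
      · exact absurd (by linarith : ds = 1) hne
      · linarith
    have hC : 0 < 4 * (1 - γ) * (2 * ds + 1) + γ ^ 2 * (ds + 1) ^ 2 := by
      nlinarith [sq_nonneg (γ * (ds + 1) ^ 2 - 2 * (2 * ds + 1)), sq_nonneg (ds + 1),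
        mul_pos hds hds, mul_pos (mul_pos hds hds) hds]
    have hB : 0 < 3 * (γ - 2) ^ 2 + γ ^ 2 * ds ^ 2 := by
      rcases eq_or_ne γ 2 with h | h
      · subst h; nlinarith [mul_pos hds hds]
      · have h' : 0 < (γ - 2) ^ 2 := by rcases (sub_ne_zero.mpr h).lt_or_gt with hl | hl <;> nlinarith
        nlinarith [sq_nonneg (γ * ds)]
    have heq2 : 8 * ds ^ 2 * (αcr - α)
        = (ds - 1) * (4 * (1 - γ) * (2 * ds + 1) + γ ^ 2 * (ds + 1) ^ 2) := by
      simp only [αcr]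
      linear_combination (-1 : ℝ) * hα
    have hS1 : S 1 = (2 - γ) ^ 2 / 8 - γ ^ 2 / 24 - (2 - γ) * γ / 4 + α / 2 + 1 / 2 := by
      simp only [S]; rw [hQ1]; ring
    have hSds : 24 * ds * S ds = 3 * (2 - γ) ^ 2 - γ ^ 2 * ds ^ 4 - 6 * (2 - γ) * γ * ds ^ 2
        + 24 * α * ds ^ 2 - 12 * α * ds ^ 3 + 12 * ds ^ 2 := by
      simp only [S]; rw [hQ1]; field_simp; ring
    have heq3 : 48 * ds ^ 2 * (S ds - S 1)
        = (ds - 1) ^ 3 * (3 * (γ - 2) ^ 2 + γ ^ 2 * ds ^ 2) := by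
      linear_combination (2 * ds) * hSds - (48 * ds ^ 2) * hS1 + (-3 * (ds - 1) ^ 2) * hα
    have hds2 : (0:ℝ) < ds ^ 2 := by positivity
    constructor
    · intro hlt
      have hprod : 0 < (ds - 1) * (4 * (1 - γ) * (2 * ds + 1) + γ ^ 2 * (ds + 1) ^ 2) := by
        rw [← heq2]
        exact mul_pos (by positivity : (0:ℝ) < 8 * ds ^ 2) (sub_pos.mpr hlt)
      have h1s : 1 < ds := by
        by_contra hcon
        push_neg at hcon
        nlinarith [mul_nonneg hC.le (sub_nonneg.mpr hcon)]
      have hcube : 0 < (ds - 1) ^ 3 := pow_pos (by linarith) 3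
      have hx : 0 < S ds - S 1 := by
        by_contra hcon
        push_neg at hcon
        have hle : 48 * ds ^ 2 * (S ds - S 1) ≤ 0 :=
          mul_nonpos_iff.mpr (Or.inl ⟨by positivity, hcon⟩)
        linarith [mul_pos hcube hB]
      linarith
    · intro hlt
      have hprod : (ds - 1) * (4 * (1 - γ) * (2 * ds + 1) + γ ^ 2 * (ds + 1) ^ 2) < 0 := by
        rw [← heq2]
        exact mul_neg_of_pos_of_neg (by positivity : (0:ℝ) < 8 * ds ^ 2) (sub_neg.mpr hlt)
      have h1s : ds < 1 := by
        by_contra hcon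
        push_neg at hcon
        linarith [mul_nonneg (sub_nonneg.mpr hcon) hC.le]
      have hcube : (ds - 1) ^ 3 < 0 := Odd.pow_neg (by decide) (by linarith)
      have hx : S ds - S 1 < 0 := by
        by_contra hcon
        push_neg at hcon
        have hle : 0 ≤ 48 * ds ^ 2 * (S ds - S 1) :=
          mul_nonneg (by positivity) hcon
        linarith [mul_neg_of_neg_of_pos hcube hB]
      linarith
end

section
/- Fix γ, α ∈ ℝ and define Q̂(d) = (1/d²)·((2−γ)/2 + γd²/2)² + 2α(d−1) and Ŝ(d) = (2−γ)²/(8d) − γ²d³/24 − (2−γ)γd/4 + αd − αd²/2 + Q̂(1)·d/2 for d > 0. If d > 0 satisfies the conjugate flow equations Q̂(d) = Q̂(1) and Ŝ(d) = Ŝ(1), then d = 1. (Hence the conformal water-wave problem admits no conjugate laminar flows, i.e. no bores.) -/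
/-!
Q̂(1) = 1, and adding (d − 1)/4 times the Bernoulli equation to the flow-force equation
eliminates α: Ŝ(d) − Ŝ(1) + (d − 1)/4 · (Q̂(d) − Q̂(1)) = (d − 1)³ (γ²d² + 3(γ − 2)²) / (48 d²).
The quadratic factor γ²d² + 3(γ − 2)² cannot vanish for d ≠ 0 (it would force γ = 0 and γ = 2),
so conjugate flows have (d − 1)³ = 0.
-/

noncomputable section

namespace LaminarFlow

variable (γ α : ℝ)

def bernoulliConst (d : ℝ) : ℝ :=
  (1 / d ^ 2) * ((2 - γ) / 2 + γ * d ^ 2 / 2) ^ 2 + 2 * α * (d - 1)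

def flowForce (d : ℝ) : ℝ :=
  (2 - γ) ^ 2 / (8 * d) - γ ^ 2 * d ^ 3 / 24 - (2 - γ) * γ * d / 4 + α * d - α * d ^ 2 / 2
    + bernoulliConst γ α 1 * d / 2

lemma bernoulliConst_one : bernoulliConst γ α 1 = 1 := by
  unfold bernoulliConst
  ring

lemma flowForce_sub_add_bernoulliConst_sub {d : ℝ} (hd : d ≠ 0) :
    flowForce γ α d - flowForce γ α 1 + (d - 1) / 4 * (bernoulliConst γ α d - bernoulliConst γ α 1)
      = (d - 1) ^ 3 * (γ ^ 2 * d ^ 2 + 3 * (γ - 2) ^ 2) / (48 * d ^ 2) := by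
  simp only [flowForce, bernoulliConst_one]
  unfold bernoulliConst
  field_simp
  ring

variable {γ} in
lemma sq_mul_sq_add_three_mul_sq_pos {d : ℝ} (hd : d ≠ 0) :
    0 < γ ^ 2 * d ^ 2 + 3 * (γ - 2) ^ 2 := by
  rcases eq_or_ne γ 0 with rfl | hγ
  · norm_num
  · positivity

variable {γ α} in
theorem eq_one_of_conjugate {d : ℝ} (hd : d ≠ 0)
    (hQ : bernoulliConst γ α d = bernoulliConst γ α 1) (hS : flowForce γ α d = flowForce γ α 1) :
    d = 1 := by
  have h := flowForce_sub_add_bernoulliConst_sub γ α hd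
  rw [hQ, hS, sub_self, sub_self, mul_zero, add_zero, eq_comm, div_eq_zero_iff] at h
  have hpos := sq_mul_sq_add_three_mul_sq_pos (γ := γ) hd
  have : (d - 1) ^ 3 = 0 := by
    simpa [hd, hpos.ne'] using h
  exact sub_eq_zero.mp (pow_eq_zero_iff three_ne_zero |>.mp this)

end LaminarFlow

end

open LaminarFlow in
/-- Nonexistence of conjugate laminar flows (hence of bores): any depth `d > 0`
with the same Bernoulli constant and flow force as the unit-depth laminar flow
must equal `1`. -/
theorem no_conjugate_flows (γ α : ℝ)
    (Q S : ℝ → ℝ)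
    (hQ : ∀ d : ℝ, Q d = (1 / d ^ 2) * ((2 - γ) / 2 + γ * d ^ 2 / 2) ^ 2 + 2 * α * (d - 1))
    (hS : ∀ d : ℝ, S d = (2 - γ) ^ 2 / (8 * d) - γ ^ 2 * d ^ 3 / 24
      - (2 - γ) * γ * d / 4 + α * d - α * d ^ 2 / 2 + Q 1 * d / 2)
    (d : ℝ) (hd : 0 < d) (hQd : Q d = Q 1) (hSd : S d = S 1) :
    d = 1 := by
  obtain rfl : Q = bernoulliConst γ α := funext hQ
  obtain rfl : S = flowForce γ α := funext hS
  exact eq_one_of_conjugate hd.ne' hQd hSd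
end

section
/- Let R = {(x,y) ∈ ℝ² : 0 < y < 1} and let w : closure(R) → ℝ be continuous on closure(R), continuously differentiable up to the boundary, harmonic in R, with w(x,0) = 0 for all x, w not identically zero, and such that sup_{0 ≤ y ≤ 1} ( |w(x,y)| + |∇w(x,y)| ) → 0 as |x| → ∞. Then there exists M₀ > 0 such that for every M ≥ M₀, ∫_{−M}^{M} w(x,1)·∂_y w(x,1) dx > 0. -/
noncomputable section

open Real MeasureTheory intervalIntegral

namespace SIP

lemma isOpen_stripR : IsOpen stripR := by
  have : stripR = (Prod.snd : ℝ × ℝ → ℝ) ⁻¹' (Set.Ioo 0 1) := by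
    ext p; simp [stripR, Set.mem_Ioo]
  rw [this]; exact isOpen_Ioo.preimage continuous_snd

lemma hasDerivAt_vert {f : ℝ × ℝ → ℝ} {p : ℝ × ℝ} (hf : DifferentiableAt ℝ f p) :
    HasDerivAt (fun t => f (p.1, t)) (py f p) p.2 := by
  have hc : HasDerivAt (fun t : ℝ => ((p.1 : ℝ), t)) ((0:ℝ), (1:ℝ)) p.2 :=
    HasDerivAt.prodMk (hasDerivAt_const p.2 p.1) (hasDerivAt_id p.2)
  have h := hf.hasFDerivAt
  rw [show p = (p.1, p.2) from rfl] at h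
  simpa [py, Function.comp_def] using h.comp_hasDerivAt p.2 hc

lemma hasDerivAt_horiz {f : ℝ × ℝ → ℝ} {p : ℝ × ℝ} (hf : DifferentiableAt ℝ f p) :
    HasDerivAt (fun s => f (s, p.2)) (px f p) p.1 := by
  have hc : HasDerivAt (fun s : ℝ => (s, (p.2 : ℝ))) ((1:ℝ), (0:ℝ)) p.1 :=
    HasDerivAt.prodMk (hasDerivAt_id p.1) (hasDerivAt_const p.1 p.2)
  have h := hf.hasFDerivAt
  rw [show p = (p.1, p.2) from rfl] at h
  simpa [px, Function.comp_def] using h.comp_hasDerivAt p.1 hc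

lemma cont_py {f : ℝ × ℝ → ℝ} (hf : ContDiff ℝ 1 f) : Continuous (py f) :=
  (hf.continuous_fderiv one_ne_zero).clm_apply continuous_const

lemma cont_px {f : ℝ × ℝ → ℝ} (hf : ContDiff ℝ 1 f) : Continuous (px f) :=
  (hf.continuous_fderiv one_ne_zero).clm_apply continuous_const

lemma contDiffOn_py {w : ℝ × ℝ → ℝ} (hC2 : ContDiffOn ℝ 2 w stripR) :
    ContDiffOn ℝ 1 (py w) stripR :=
  (hC2.fderiv_of_isOpen isOpen_stripR (by norm_num)).clm_apply contDiffOn_const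

lemma contDiffOn_px {w : ℝ × ℝ → ℝ} (hC2 : ContDiffOn ℝ 2 w stripR) :
    ContDiffOn ℝ 1 (px w) stripR :=
  (hC2.fderiv_of_isOpen isOpen_stripR (by norm_num)).clm_apply contDiffOn_const

lemma diffAt_py {w : ℝ × ℝ → ℝ} (hC2 : ContDiffOn ℝ 2 w stripR) {p : ℝ × ℝ}
    (hp : p ∈ stripR) : DifferentiableAt ℝ (py w) p :=
  ((contDiffOn_py hC2).differentiableOn one_ne_zero).differentiableAt (isOpen_stripR.mem_nhds hp)

lemma diffAt_px {w : ℝ × ℝ → ℝ} (hC2 : ContDiffOn ℝ 2 w stripR) {p : ℝ × ℝ}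
    (hp : p ∈ stripR) : DifferentiableAt ℝ (px w) p :=
  ((contDiffOn_px hC2).differentiableOn one_ne_zero).differentiableAt (isOpen_stripR.mem_nhds hp)

lemma contOn_pypy {w : ℝ × ℝ → ℝ} (hC2 : ContDiffOn ℝ 2 w stripR) :
    ContinuousOn (py (py w)) stripR := by
  have h2 : ContDiffOn ℝ 0 (fderiv ℝ (py w)) stripR :=
    (contDiffOn_py hC2).fderiv_of_isOpen isOpen_stripR (by norm_num)
  exact (contDiffOn_zero.mp h2).clm_apply continuousOn_const

lemma contOn_pxpx {w : ℝ × ℝ → ℝ} (hC2 : ContDiffOn ℝ 2 w stripR) :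
    ContinuousOn (px (px w)) stripR := by
  have h2 : ContDiffOn ℝ 0 (fderiv ℝ (px w)) stripR :=
    (contDiffOn_px hC2).fderiv_of_isOpen isOpen_stripR (by norm_num)
  exact (contDiffOn_zero.mp h2).clm_apply continuousOn_const

lemma abs_px_le {w : ℝ × ℝ → ℝ} (p : ℝ × ℝ) : |px w p| ≤ ‖fderiv ℝ w p‖ := by
  have h := (fderiv ℝ w p).le_opNorm ((1:ℝ), (0:ℝ))
  have hn : ‖((1:ℝ), (0:ℝ))‖ = 1 := by
    rw [Prod.norm_def]; norm_num
  rw [hn, mul_one] at h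
  simpa [px, Real.norm_eq_abs] using h

end SIP

namespace SIP

/-- Vertical divergence integrand. -/
def Dv (w : ℝ × ℝ → ℝ) (p : ℝ × ℝ) : ℝ := (py w p) ^ 2 + w p * py (py w) p

/-- Squared gradient. -/
def gradSq (w : ℝ × ℝ → ℝ) (p : ℝ × ℝ) : ℝ := (px w p) ^ 2 + (py w p) ^ 2

/-- Side boundary term. -/
def sideT (w : ℝ × ℝ → ℝ) (M s : ℝ) : ℝ :=
  w (M, s) * px w (M, s) - w (-M, s) * px w (-M, s)

/-- The derivative of the level integral. -/
def PsiF (w : ℝ × ℝ → ℝ) (M s : ℝ) : ℝ :=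
  (∫ x in (-M)..M, gradSq w (x, s)) - sideT w M s

lemma contOn_Dv {w : ℝ × ℝ → ℝ} (hC1 : ContDiff ℝ 1 w) (hC2 : ContDiffOn ℝ 2 w stripR) :
    ContinuousOn (Dv w) stripR :=
  (((cont_py hC1).pow 2).continuousOn).add
    (hC1.continuous.continuousOn.mul (contOn_pypy hC2))

lemma swap_lemma (D : ℝ × ℝ → ℝ) (hD : ContinuousOn D stripR) {a b c d : ℝ}
    (hab : a ≤ b) (hcd : c ≤ d) (h0 : 0 < c) (h1 : d < 1) :
    ∫ x in a..b, ∫ s in c..d, D (x, s) = ∫ s in c..d, ∫ x in a..b, D (x, s) := by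
  have hsub : (Set.Icc a b ×ˢ Set.Icc c d : Set (ℝ × ℝ)) ⊆ stripR := by
    rintro ⟨x, s⟩ ⟨hx, hs⟩
    exact ⟨lt_of_lt_of_le h0 hs.1, lt_of_le_of_lt hs.2 h1⟩
  have hint : IntegrableOn D (Set.Ioc a b ×ˢ Set.Ioc c d) volume := by
    have : IntegrableOn D (Set.Icc a b ×ˢ Set.Icc c d) volume :=
      (hD.mono hsub).integrableOn_compact (isCompact_Icc.prod isCompact_Icc)
    exact this.mono_set (Set.prod_mono Set.Ioc_subset_Icc_self Set.Ioc_subset_Icc_self)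
  have key : ∫ x in Set.Ioc a b, ∫ s in Set.Ioc c d, D (x, s) ∂volume ∂volume
      = ∫ s in Set.Ioc c d, ∫ x in Set.Ioc a b, D (x, s) ∂volume ∂volume := by
    apply integral_integral_swap
    have : Function.uncurry (fun x s => D (x, s)) = D := by
      funext p; simp [Function.uncurry]
    rw [this, Measure.prod_restrict, ← Measure.volume_eq_prod]
    exact hint
  rw [integral_of_le hab, integral_of_le hcd]
  simp_rw [integral_of_le hcd, integral_of_le hab]
  exact key

/-- Green's identity on the rectangle `[-M,M] × [y0,y1]`. -/
lemma green (w : ℝ × ℝ → ℝ) (hC1 : ContDiff ℝ 1 w) (hC2 : ContDiffOn ℝ 2 w stripR)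
    (hharm : ∀ p ∈ stripR, px (px w) p + py (py w) p = 0)
    {M y0 y1 : ℝ} (hM : 0 ≤ M) (hy0 : y0 ∈ Set.Ioo (0:ℝ) 1) (hy1 : y1 ∈ Set.Ioo (0:ℝ) 1)
    (hle : y0 ≤ y1) :
    (∫ x in (-M)..M, w (x, y1) * py w (x, y1)) - (∫ x in (-M)..M, w (x, y0) * py w (x, y0))
      = ∫ s in y0..y1, PsiF w M s := by
  have hMM : -M ≤ M := by linarith
  have hwc : Continuous w := hC1.continuous
  have hpy := cont_py hC1
  have hpx := cont_px hC1
  have hIcc : Set.Icc y0 y1 ⊆ Set.Ioo (0:ℝ) 1 := Set.Icc_subset _ hy0 hy1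
  have hmem : ∀ (x : ℝ), ∀ s ∈ Set.Icc y0 y1, ((x, s) : ℝ × ℝ) ∈ stripR := fun x s hs =>
    ⟨(hIcc hs).1, (hIcc hs).2⟩
  -- fiberwise FTC in the vertical direction
  have step2 : ∀ x : ℝ, (∫ s in y0..y1, Dv w (x, s))
      = w (x, y1) * py w (x, y1) - w (x, y0) * py w (x, y0) := by
    intro x
    apply intervalIntegral.integral_eq_sub_of_hasDerivAt
    · intro s hs
      rw [Set.uIcc_of_le hle] at hs
      have hps : ((x, s) : ℝ × ℝ) ∈ stripR := hmem x s hs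
      have h1 : HasDerivAt (fun t => w (x, t)) (py w (x, s)) s :=
        hasDerivAt_vert (p := ((x : ℝ), s)) (hC1.differentiable one_ne_zero _)
      have h2 : HasDerivAt (fun t => py w (x, t)) (py (py w) (x, s)) s :=
        hasDerivAt_vert (p := ((x : ℝ), s)) (diffAt_py hC2 hps)
      have h3 := h1.mul h2
      have : py w (x, s) * py w (x, s) + w (x, s) * py (py w) (x, s) = Dv w (x, s) := by
        simp [Dv]; ring
      rwa [this] at h3
    · apply ContinuousOn.intervalIntegrable
      rw [Set.uIcc_of_le hle]
      exact (contOn_Dv hC1 hC2).comp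
        (continuous_const.prodMk continuous_id).continuousOn
        (fun s hs => hmem x s hs)
  -- integrability of the boundary-level integrands
  have hg : ∀ y : ℝ, IntervalIntegrable (fun x => w (x, y) * py w (x, y)) volume (-M) M := by
    intro y
    apply Continuous.intervalIntegrable
    exact (hwc.comp (continuous_id.prodMk continuous_const)).mul
      (hpy.comp (continuous_id.prodMk continuous_const))
  -- pointwise identity on the horizontal slices
  have step4 : ∀ s ∈ Set.Icc y0 y1, (∫ x in (-M)..M, Dv w (x, s)) = PsiF w M s := by
    intro s hs
    have hps : ∀ x : ℝ, ((x, s) : ℝ × ℝ) ∈ stripR := fun x => hmem x s hs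
    have hlineB : ContinuousOn (fun x : ℝ => (px w (x, s)) ^ 2 + w (x, s) * px (px w) (x, s))
        (Set.uIcc (-M) M) := by
      have hxx : ContinuousOn (fun x : ℝ => px (px w) (x, s)) (Set.uIcc (-M) M) :=
        (contOn_pxpx hC2).comp (continuous_id.prodMk continuous_const).continuousOn
          (fun x _ => hps x)
      exact (((hpx.comp (continuous_id.prodMk continuous_const)).pow 2).continuousOn).add
        (((hwc.comp (continuous_id.prodMk continuous_const)).continuousOn).mul hxx)
    have hBint : IntervalIntegrable
        (fun x => (px w (x, s)) ^ 2 + w (x, s) * px (px w) (x, s)) volume (-M) M :=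
      hlineB.intervalIntegrable
    have hAint : IntervalIntegrable (fun x => gradSq w (x, s)) volume (-M) M := by
      apply Continuous.intervalIntegrable
      exact ((hpx.comp (continuous_id.prodMk continuous_const)).pow 2).add
        ((hpy.comp (continuous_id.prodMk continuous_const)).pow 2)
    have hBeval : (∫ x in (-M)..M, ((px w (x, s)) ^ 2 + w (x, s) * px (px w) (x, s)))
        = w (M, s) * px w (M, s) - w (-M, s) * px w (-M, s) := by
      apply intervalIntegral.integral_eq_sub_of_hasDerivAt
      · intro x _
        have h1 : HasDerivAt (fun t => w (t, s)) (px w (x, s)) x :=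
          hasDerivAt_horiz (p := ((x : ℝ), s)) (hC1.differentiable one_ne_zero _)
        have h2 : HasDerivAt (fun t => px w (t, s)) (px (px w) (x, s)) x :=
          hasDerivAt_horiz (p := ((x : ℝ), s)) (diffAt_px hC2 (hps x))
        have h3 := h1.mul h2
        have : px w (x, s) * px w (x, s) + w (x, s) * px (px w) (x, s)
            = (px w (x, s)) ^ 2 + w (x, s) * px (px w) (x, s) := by ring
        rwa [this] at h3
      · exact hBint
    have hpt : ∀ x : ℝ, Dv w (x, s)
        = gradSq w (x, s) - ((px w (x, s)) ^ 2 + w (x, s) * px (px w) (x, s)) := by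
      intro x
      have hh := hharm (x, s) (hps x)
      have : py (py w) (x, s) = - px (px w) (x, s) := by linarith
      simp only [Dv, gradSq, this]; ring
    calc (∫ x in (-M)..M, Dv w (x, s))
        = ∫ x in (-M)..M, (gradSq w (x, s)
            - ((px w (x, s)) ^ 2 + w (x, s) * px (px w) (x, s))) := by
          apply intervalIntegral.integral_congr
          intro x _; exact hpt x
      _ = (∫ x in (-M)..M, gradSq w (x, s))
            - ∫ x in (-M)..M, ((px w (x, s)) ^ 2 + w (x, s) * px (px w) (x, s)) :=
          intervalIntegral.integral_sub hAint hBint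
      _ = PsiF w M s := by rw [hBeval]; rfl
  calc (∫ x in (-M)..M, w (x, y1) * py w (x, y1)) - ∫ x in (-M)..M, w (x, y0) * py w (x, y0)
      = ∫ x in (-M)..M, (w (x, y1) * py w (x, y1) - w (x, y0) * py w (x, y0)) :=
        (intervalIntegral.integral_sub (hg y1) (hg y0)).symm
    _ = ∫ x in (-M)..M, ∫ s in y0..y1, Dv w (x, s) :=
        intervalIntegral.integral_congr (fun x _ => (step2 x).symm)
    _ = ∫ s in y0..y1, ∫ x in (-M)..M, Dv w (x, s) :=
        swap_lemma (Dv w) (contOn_Dv hC1 hC2) hMM hle hy0.1 hy1.2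
    _ = ∫ s in y0..y1, PsiF w M s := by
        apply intervalIntegral.integral_congr
        intro s hs
        rw [Set.uIcc_of_le hle] at hs
        exact step4 s hs

end SIP

namespace SIP

lemma cont_PsiF {w : ℝ × ℝ → ℝ} (hC1 : ContDiff ℝ 1 w) (M : ℝ) :
    Continuous (PsiF w M) := by
  have hwc : Continuous w := hC1.continuous
  have hpy := cont_py hC1
  have hpx := cont_px hC1
  have h1 : Continuous fun s => ∫ x in (-M)..M, gradSq w (x, s) := by
    apply intervalIntegral.continuous_parametric_intervalIntegral_of_continuous'
    show Continuous (Function.uncurry fun (s x : ℝ) => gradSq w (x, s))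
    have : Continuous (gradSq w) := (hpx.pow 2).add (hpy.pow 2)
    exact this.comp (continuous_snd.prodMk continuous_fst)
  have h2 : Continuous (sideT w M) := by
    have l1 : Continuous fun s : ℝ => ((M : ℝ), s) := continuous_const.prodMk continuous_id
    have l2 : Continuous fun s : ℝ => ((-M : ℝ), s) := continuous_const.prodMk continuous_id
    exact ((hwc.comp l1).mul (hpx.comp l1)).sub ((hwc.comp l2).mul (hpx.comp l2))
  exact h1.sub h2

/-- Green's identity up to the boundary. -/
lemma green01 (w : ℝ × ℝ → ℝ) (hC1 : ContDiff ℝ 1 w) (hC2 : ContDiffOn ℝ 2 w stripR)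
    (hharm : ∀ p ∈ stripR, px (px w) p + py (py w) p = 0)
    (hbot : ∀ x : ℝ, w (x, 0) = 0) {M : ℝ} (hM : 0 ≤ M) :
    (∫ x in (-M)..M, w (x, 1) * py w (x, 1)) = ∫ s in (0:ℝ)..1, PsiF w M s := by
  have hwc : Continuous w := hC1.continuous
  have hpy := cont_py hC1
  have hΨc : Continuous (PsiF w M) := cont_PsiF hC1 M
  set Φ : ℝ → ℝ := fun y => ∫ x in (-M)..M, w (x, y) * py w (x, y) with hΦ
  have hΦc : Continuous Φ := by
    apply intervalIntegral.continuous_parametric_intervalIntegral_of_continuous'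
    show Continuous (Function.uncurry fun (y x : ℝ) => w (x, y) * py w (x, y))
    have l : Continuous fun p : ℝ × ℝ => ((p.2 : ℝ), p.1) := continuous_snd.prodMk continuous_fst
    exact (hwc.comp l).mul (hpy.comp l)
  set F : ℝ → ℝ := fun y => Φ y - ∫ s in (1/2 : ℝ)..y, PsiF w M s with hF
  have hFc : Continuous F := by
    apply hΦc.sub
    exact intervalIntegral.continuous_parametric_intervalIntegral_of_continuous
      (f := fun (_ : ℝ) t => PsiF w M t) (hΨc.comp continuous_snd) continuous_id
  have h2 : (1/2 : ℝ) ∈ Set.Ioo (0:ℝ) 1 := by norm_num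
  have hconst : Set.EqOn F (fun _ => F (1/2)) (Set.Ioo 0 1) := by
    intro y hy
    have key : ∫ s in (1/2 : ℝ)..y, PsiF w M s = Φ y - Φ (1/2) := by
      simp only [hΦ]
      rcases le_total y (1/2) with h | h
      · have hg := green w hC1 hC2 hharm hM hy h2 h
        rw [intervalIntegral.integral_symm]
        linarith [hg]
      · have hg := green w hC1 hC2 hharm hM h2 hy h
        linarith [hg]
    simp only [F, key, intervalIntegral.integral_same, sub_zero]
    ring
  have hIcc : Set.EqOn F (fun _ => F (1/2)) (Set.Icc 0 1) := by
    have := hconst.closure hFc continuous_const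
    rwa [closure_Ioo (by norm_num : (0:ℝ) ≠ 1)] at this
  have hF10 : F 1 = F 0 := by
    rw [hIcc (by norm_num : (1:ℝ) ∈ Set.Icc 0 1), hIcc (by norm_num : (0:ℝ) ∈ Set.Icc 0 1)]
  have hΦ0 : Φ 0 = 0 := by
    simp only [Φ]
    have : (fun x => w (x, 0) * py w (x, 0)) = fun _ : ℝ => (0:ℝ) := by
      funext x; rw [hbot x]; ring
    rw [this]; simp
  have hint : ∀ a b : ℝ, IntervalIntegrable (PsiF w M) volume a b :=
    fun a b => hΨc.intervalIntegrable a b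
  have hadd : (∫ s in (0:ℝ)..(1/2 : ℝ), PsiF w M s) + (∫ s in (1/2 : ℝ)..1, PsiF w M s)
      = ∫ s in (0:ℝ)..1, PsiF w M s :=
    intervalIntegral.integral_add_adjacent_intervals (hint 0 (1/2)) (hint (1/2) 1)
  have hsymm : (∫ s in (1/2 : ℝ)..(0:ℝ), PsiF w M s) = - ∫ s in (0:ℝ)..(1/2:ℝ), PsiF w M s :=
    intervalIntegral.integral_symm 0 (1/2)
  have : Φ 1 - (∫ s in (1/2 : ℝ)..1, PsiF w M s) = Φ 0 - ∫ s in (1/2 : ℝ)..(0:ℝ), PsiF w M s := hF10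
  show Φ 1 = ∫ s in (0:ℝ)..1, PsiF w M s
  rw [hΦ0] at this
  linarith [hadd, hsymm, this]

end SIP

namespace SIP

lemma gradSq_nonneg (w : ℝ × ℝ → ℝ) (p : ℝ × ℝ) : 0 ≤ gradSq w p :=
  add_nonneg (sq_nonneg _) (sq_nonneg _)

lemma cont_gradSq {w : ℝ × ℝ → ℝ} (hC1 : ContDiff ℝ 1 w) : Continuous (gradSq w) :=
  ((cont_px hC1).pow 2).add ((cont_py hC1).pow 2)

lemma cont_inner {w : ℝ × ℝ → ℝ} (hC1 : ContDiff ℝ 1 w) (M : ℝ) :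
    Continuous fun s => ∫ x in (-M)..M, gradSq w (x, s) := by
  apply intervalIntegral.continuous_parametric_intervalIntegral_of_continuous'
  show Continuous (Function.uncurry fun (s x : ℝ) => gradSq w (x, s))
  exact (cont_gradSq hC1).comp (continuous_snd.prodMk continuous_fst)

lemma cont_sideT {w : ℝ × ℝ → ℝ} (hC1 : ContDiff ℝ 1 w) (M : ℝ) :
    Continuous (sideT w M) := by
  have hwc : Continuous w := hC1.continuous
  have hpx := cont_px hC1
  have l1 : Continuous fun s : ℝ => ((M : ℝ), s) := continuous_const.prodMk continuous_id
  have l2 : Continuous fun s : ℝ => ((-M : ℝ), s) := continuous_const.prodMk continuous_id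
  exact ((hwc.comp l1).mul (hpx.comp l1)).sub ((hwc.comp l2).mul (hpx.comp l2))

end SIP

open SIP


/-- Positivity of the surface integral `∫ w·w_y` for a nontrivial harmonic
function in the strip vanishing on the bottom and decaying at infinity. -/
theorem surface_integral_positive (w : ℝ × ℝ → ℝ)
    (hC1 : ContDiff ℝ 1 w)
    (hC2 : ContDiffOn ℝ 2 w stripR)
    (hharm : ∀ p ∈ stripR, px (px w) p + py (py w) p = 0)
    (hbot : ∀ x : ℝ, w (x, 0) = 0)
    (hnz : ∃ p : ℝ × ℝ, p.2 ∈ Set.Icc (0:ℝ) 1 ∧ w p ≠ 0)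
    (hdecay : ∀ ε > 0, ∃ M : ℝ, ∀ p : ℝ × ℝ, M ≤ |p.1| → p.2 ∈ Set.Icc (0:ℝ) 1 →
      |w p| + ‖fderiv ℝ w p‖ ≤ ε) :
    ∃ M₀ > 0, ∀ M ≥ M₀, 0 < ∫ x in (-M)..M, w (x, 1) * py w (x, 1) := by
  have hwc : Continuous w := hC1.continuous
  have contG : Continuous (gradSq w) := cont_gradSq hC1
  -- find a point q in the strip where the gradient is nonzero
  obtain ⟨p, hp, hwp⟩ := hnz
  have hp2ne : p.2 ≠ 0 := by
    intro h
    apply hwp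
    have : p = (p.1, p.2) := rfl
    rw [this, h]
    exact hbot p.1
  have hp2pos : 0 < p.2 := lt_of_le_of_ne hp.1 (Ne.symm hp2ne)
  obtain ⟨c, hc, hslope⟩ := exists_hasDerivAt_eq_slope (fun t => w (p.1, t))
    (fun t => py w (p.1, t)) hp2pos
    ((hwc.comp (continuous_const.prodMk continuous_id)).continuousOn)
    (fun t _ => hasDerivAt_vert (p := ((p.1 : ℝ), t)) (hC1.differentiable one_ne_zero _))
  set q : ℝ × ℝ := ((p.1 : ℝ), c) with hqdef
  have hq : q ∈ stripR := ⟨hc.1, lt_of_lt_of_le hc.2 hp.2⟩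
  have hpynz : py w q ≠ 0 := by
    rw [hslope]
    have e1 : w (p.1, p.2) = w p := rfl
    rw [hbot p.1, sub_zero, sub_zero, e1]
    exact div_ne_zero hwp hp2ne
  have hGq : 0 < gradSq w q := by
    have h1 : 0 < (py w q) ^ 2 := by positivity
    have h2 : 0 ≤ (px w q) ^ 2 := sq_nonneg _
    simp only [gradSq]; linarith
  -- continuity ball
  obtain ⟨δ, hδpos, hδ⟩ := Metric.continuousAt_iff.mp contG.continuousAt (gradSq w q / 2)
    (half_pos hGq)
  set δ' : ℝ := min (δ/2) (min (q.2/2) ((1 - q.2)/2)) with hδ'def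
  have hδ'pos : 0 < δ' := by
    apply lt_min (half_pos hδpos)
    exact lt_min (half_pos hq.1) (half_pos (by linarith [hq.2]))
  have hδ'δ : δ' < δ := lt_of_le_of_lt (min_le_left _ _) (by linarith)
  have hδ'q2 : δ' ≤ q.2/2 := le_trans (min_le_right _ _) (min_le_left _ _)
  have hδ'q2' : δ' ≤ (1 - q.2)/2 := le_trans (min_le_right _ _) (min_le_right _ _)
  have hbox : ∀ r : ℝ × ℝ, |r.1 - q.1| ≤ δ' → |r.2 - q.2| ≤ δ' →
      gradSq w q / 2 ≤ gradSq w r := by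
    intro r h1 h2
    have hd : dist r q < δ := by
      rw [Prod.dist_eq]
      apply max_lt
      · rw [Real.dist_eq]; linarith
      · rw [Real.dist_eq]; linarith
    have := hδ hd
    rw [Real.dist_eq, abs_sub_lt_iff] at this
    linarith [this.2]
  set M₁ : ℝ := |q.1| + δ' with hM₁def
  have hM₁pos : 0 < M₁ := by
    have := abs_nonneg q.1; simp only [hM₁def]; linarith
  have hgrad_line : ∀ s : ℝ, Continuous fun x => gradSq w (x, s) := fun s =>
    contG.comp (continuous_id.prodMk continuous_const)
  have hinner_nonneg : ∀ M s : ℝ, 0 ≤ M → 0 ≤ ∫ x in (-M)..M, gradSq w (x, s) := by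
    intro M s hM
    exact intervalIntegral.integral_nonneg (by linarith) (fun x _ => gradSq_nonneg w _)
  -- middle bound at the box levels
  have hmid : ∀ s : ℝ, |s - q.2| ≤ δ' →
      2 * δ' * (gradSq w q / 2) ≤ ∫ x in (-M₁)..M₁, gradSq w (x, s) := by
    intro s hs
    set u : ℝ := q.1 - δ' with hu'
    set v : ℝ := q.1 + δ' with hv'
    have hu : -M₁ ≤ u := by
      have := neg_abs_le q.1; simp only [hM₁def, hu']; linarith
    have hv : v ≤ M₁ := by
      have := le_abs_self q.1; simp only [hM₁def, hv']; linarith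
    have huv : u ≤ v := by simp only [hu', hv']; linarith
    have i1 := (hgrad_line s).intervalIntegrable (μ := volume) (-M₁) u
    have i2 := (hgrad_line s).intervalIntegrable (μ := volume) u v
    have i3 := (hgrad_line s).intervalIntegrable (μ := volume) v M₁
    have i12 := (hgrad_line s).intervalIntegrable (μ := volume) (-M₁) v
    have hsplit1 : (∫ x in (-M₁)..u, gradSq w (x, s)) + (∫ x in u..v, gradSq w (x, s))
        = ∫ x in (-M₁)..v, gradSq w (x, s) :=
      intervalIntegral.integral_add_adjacent_intervals i1 i2
    have hsplit2 : (∫ x in (-M₁)..v, gradSq w (x, s)) + (∫ x in v..M₁, gradSq w (x, s))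
        = ∫ x in (-M₁)..M₁, gradSq w (x, s) :=
      intervalIntegral.integral_add_adjacent_intervals i12 i3
    have hn1 : 0 ≤ ∫ x in (-M₁)..u, gradSq w (x, s) :=
      intervalIntegral.integral_nonneg hu (fun x _ => gradSq_nonneg w _)
    have hn3 : 0 ≤ ∫ x in v..M₁, gradSq w (x, s) :=
      intervalIntegral.integral_nonneg hv (fun x _ => gradSq_nonneg w _)
    have hmidb : (v - u) * (gradSq w q / 2) ≤ ∫ x in u..v, gradSq w (x, s) := by
      have hconst : (∫ _ in u..v, gradSq w q / 2) = (v - u) * (gradSq w q / 2) := by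
        rw [intervalIntegral.integral_const, smul_eq_mul]
      rw [← hconst]
      apply intervalIntegral.integral_mono_on huv (intervalIntegrable_const) i2
      intro x hx
      apply hbox (x, s)
      · simp only []
        rw [abs_le]
        constructor
        · simp only [hu'] at hx; linarith [hx.1]
        · simp only [hv'] at hx; linarith [hx.2]
      · exact hs
    have h2δ : v - u = 2 * δ' := by simp only [hu', hv']; ring
    rw [h2δ] at hmidb
    linarith
  -- positivity of the energy at M₁
  set E : ℝ → ℝ := fun M => ∫ s in (0:ℝ)..1, ∫ x in (-M)..M, gradSq w (x, s) with hEdef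
  have hE1pos : 0 < E M₁ := by
    set s1 : ℝ := q.2 - δ' with hs1'
    set s2 : ℝ := q.2 + δ' with hs2'
    have hs1 : 0 ≤ s1 := by simp only [hs1']; linarith [hq.1]
    have hs2 : s2 ≤ 1 := by simp only [hs2']; linarith [hq.2]
    have hs12 : s1 ≤ s2 := by simp only [hs1', hs2']; linarith
    have ic := (cont_inner hC1 M₁)
    have i1 := ic.intervalIntegrable (μ := volume) 0 s1
    have i2 := ic.intervalIntegrable (μ := volume) s1 s2
    have i3 := ic.intervalIntegrable (μ := volume) s2 1
    have i12 := ic.intervalIntegrable (μ := volume) 0 s2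
    have hsplit1 : (∫ s in (0:ℝ)..s1, ∫ x in (-M₁)..M₁, gradSq w (x, s))
        + (∫ s in s1..s2, ∫ x in (-M₁)..M₁, gradSq w (x, s))
        = ∫ s in (0:ℝ)..s2, ∫ x in (-M₁)..M₁, gradSq w (x, s) :=
      intervalIntegral.integral_add_adjacent_intervals i1 i2
    have hsplit2 : (∫ s in (0:ℝ)..s2, ∫ x in (-M₁)..M₁, gradSq w (x, s))
        + (∫ s in s2..(1:ℝ), ∫ x in (-M₁)..M₁, gradSq w (x, s))
        = ∫ s in (0:ℝ)..(1:ℝ), ∫ x in (-M₁)..M₁, gradSq w (x, s) :=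
      intervalIntegral.integral_add_adjacent_intervals i12 i3
    have hn1 : 0 ≤ ∫ s in (0:ℝ)..s1, ∫ x in (-M₁)..M₁, gradSq w (x, s) :=
      intervalIntegral.integral_nonneg hs1 (fun s _ => hinner_nonneg M₁ s hM₁pos.le)
    have hn3 : 0 ≤ ∫ s in s2..(1:ℝ), ∫ x in (-M₁)..M₁, gradSq w (x, s) :=
      intervalIntegral.integral_nonneg hs2 (fun s _ => hinner_nonneg M₁ s hM₁pos.le)
    have hmidb : (s2 - s1) * (2 * δ' * (gradSq w q / 2))
        ≤ ∫ s in s1..s2, ∫ x in (-M₁)..M₁, gradSq w (x, s) := by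
      have hconst : (∫ _ in s1..s2, 2 * δ' * (gradSq w q / 2))
          = (s2 - s1) * (2 * δ' * (gradSq w q / 2)) := by
        rw [intervalIntegral.integral_const, smul_eq_mul]
      rw [← hconst]
      apply intervalIntegral.integral_mono_on hs12 (intervalIntegrable_const) i2
      intro s hs
      apply hmid
      rw [abs_le]
      constructor
      · simp only [hs1'] at hs; linarith [hs.1]
      · simp only [hs2'] at hs; linarith [hs.2]
    have h2δ : s2 - s1 = 2 * δ' := by simp only [hs1', hs2']; ring
    rw [h2δ] at hmidb
    have hpos : 0 < 2 * δ' * (2 * δ' * (gradSq w q / 2)) := by positivity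
    simp only [hEdef]
    linarith
  -- monotonicity of the energy
  have hEmono : ∀ M : ℝ, M₁ ≤ M → E M₁ ≤ E M := by
    intro M hM
    apply intervalIntegral.integral_mono_on (by norm_num)
      ((cont_inner hC1 M₁).intervalIntegrable 0 1)
      ((cont_inner hC1 M).intervalIntegrable 0 1)
    intro s _
    have i1 := (hgrad_line s).intervalIntegrable (μ := volume) (-M) (-M₁)
    have i2 := (hgrad_line s).intervalIntegrable (μ := volume) (-M₁) M₁
    have i3 := (hgrad_line s).intervalIntegrable (μ := volume) M₁ M
    have i23 := (hgrad_line s).intervalIntegrable (μ := volume) (-M₁) M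
    have hsplit1 : (∫ x in (-M₁)..M₁, gradSq w (x, s)) + (∫ x in M₁..M, gradSq w (x, s))
        = ∫ x in (-M₁)..M, gradSq w (x, s) :=
      intervalIntegral.integral_add_adjacent_intervals i2 i3
    have hsplit2 : (∫ x in (-M)..(-M₁), gradSq w (x, s)) + (∫ x in (-M₁)..M, gradSq w (x, s))
        = ∫ x in (-M)..M, gradSq w (x, s) :=
      intervalIntegral.integral_add_adjacent_intervals i1 i23
    have hn1 : 0 ≤ ∫ x in (-M)..(-M₁), gradSq w (x, s) :=
      intervalIntegral.integral_nonneg (by linarith) (fun x _ => gradSq_nonneg w _)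
    have hn3 : 0 ≤ ∫ x in M₁..M, gradSq w (x, s) :=
      intervalIntegral.integral_nonneg hM (fun x _ => gradSq_nonneg w _)
    linarith
  -- choose ε and the decay radius
  set ε : ℝ := Real.sqrt (E M₁) with hεdef
  have hεpos : 0 < ε := Real.sqrt_pos.mpr hE1pos
  have hεsq : ε ^ 2 = E M₁ := Real.sq_sqrt hE1pos.le
  obtain ⟨Md, hMd⟩ := hdecay ε hεpos
  refine ⟨max M₁ Md, lt_of_lt_of_le hM₁pos (le_max_left _ _), ?_⟩
  intro M hM
  have hM1M : M₁ ≤ M := le_trans (le_max_left _ _) hM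
  have hMdM : Md ≤ M := le_trans (le_max_right _ _) hM
  have hMpos : 0 < M := lt_of_lt_of_le hM₁pos hM1M
  -- Green's identity
  have hgreen := green01 w hC1 hC2 hharm hbot hMpos.le
  -- split Psi integral
  have hsplitPsi : (∫ s in (0:ℝ)..1, PsiF w M s)
      = E M - ∫ s in (0:ℝ)..1, sideT w M s := by
    have : (∫ s in (0:ℝ)..1, PsiF w M s)
        = (∫ s in (0:ℝ)..1, ((∫ x in (-M)..M, gradSq w (x, s)) - sideT w M s)) := rfl
    rw [this, intervalIntegral.integral_sub ((cont_inner hC1 M).intervalIntegrable 0 1)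
      ((cont_sideT hC1 M).intervalIntegrable 0 1)]
  -- bound the side term
  have hside : ∀ s ∈ Set.uIoc (0:ℝ) 1, ‖sideT w M s‖ ≤ E M₁ / 2 := by
    intro s hs
    rw [Set.uIoc_of_le (by norm_num : (0:ℝ) ≤ 1)] at hs
    have hsIcc : s ∈ Set.Icc (0:ℝ) 1 := ⟨hs.1.le, hs.2⟩
    have habsM : Md ≤ |M| := by rw [abs_of_pos hMpos]; exact hMdM
    have habsM' : Md ≤ |(-M)| := by rw [abs_neg, abs_of_pos hMpos]; exact hMdM
    have hd1 := hMd ((M : ℝ), s) habsM hsIcc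
    have hd2 := hMd ((-M : ℝ), s) habsM' hsIcc
    have key : ∀ r : ℝ × ℝ, |w r| + ‖fderiv ℝ w r‖ ≤ ε → |w r * px w r| ≤ ε ^ 2 / 4 := by
      intro r hr
      have h1 : |px w r| ≤ ‖fderiv ℝ w r‖ := abs_px_le r
      have h2 : 0 ≤ |w r| := abs_nonneg _
      have h3 : 0 ≤ ‖fderiv ℝ w r‖ := norm_nonneg _
      have h4 : 0 ≤ |px w r| := abs_nonneg _
      rw [abs_mul]
      nlinarith [sq_nonneg (|w r| - ‖fderiv ℝ w r‖), sq_nonneg (|w r| + ‖fderiv ℝ w r‖)]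
    have t1 := key _ hd1
    have t2 := key _ hd2
    rw [Real.norm_eq_abs]
    simp only [sideT]
    calc |w (M, s) * px w (M, s) - w (-M, s) * px w (-M, s)|
        ≤ |w (M, s) * px w (M, s)| + |w (-M, s) * px w (-M, s)| := abs_sub _ _
      _ ≤ ε ^ 2 / 4 + ε ^ 2 / 4 := add_le_add t1 t2
      _ = E M₁ / 2 := by rw [hεsq]; ring
  have hSbound : ‖∫ s in (0:ℝ)..1, sideT w M s‖ ≤ E M₁ / 2 := by
    have := intervalIntegral.norm_integral_le_of_norm_le_const hside
    simpa using this
  rw [hgreen, hsplitPsi]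
  have h1 : (∫ s in (0:ℝ)..1, sideT w M s) ≤ E M₁ / 2 := by
    have h := hSbound
    rw [Real.norm_eq_abs] at h
    exact le_trans (le_abs_self _) h
  have h2 : E M₁ ≤ E M := hEmono M hM1M
  linarith
end
end

section
/- Let (η, ζ) be a solution of the conformal water-wave system with parameters γ, α, and define the velocity field u = (η_x ζ_x + η_y ζ_y)/(η_x² + η_y²) + γη and v = (η_x ζ_y − η_y ζ_x)/(η_x² + η_y²) on closure(R). Then: (i) u and v are harmonic in R; (ii) u_x + v_y = γη_x and u_y − v_x = γη_y in R; (iii) u·η_x − v·η_y = 0 on Γ; (iv) u² + v² + 2α(η − 1) = 1 on Γ; (v) v = 0 on B; (vi) u(x,y) → (1−γ) + γy and v(x,y) → 0 as |x| → ∞, uniformly in y. -/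
noncomputable section

open Real MeasureTheory intervalIntegral

namespace WWProof

theorem px_apply (f : ℝ × ℝ → ℝ) (p : ℝ × ℝ) : fderiv ℝ f p (1, 0) = px f p := rfl
theorem py_apply (f : ℝ × ℝ → ℝ) (p : ℝ × ℝ) : fderiv ℝ f p (0, 1) = py f p := rfl

theorem dd_add' {f g : ℝ × ℝ → ℝ} {p : ℝ × ℝ} (e : ℝ × ℝ) (hf : DifferentiableAt ℝ f p)
    (hg : DifferentiableAt ℝ g p) :
    fderiv ℝ (fun q => f q + g q) p e = fderiv ℝ f p e + fderiv ℝ g p e := by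
  rw [fderiv_fun_add hf hg]; rfl

theorem dd_sub' {f g : ℝ × ℝ → ℝ} {p : ℝ × ℝ} (e : ℝ × ℝ) (hf : DifferentiableAt ℝ f p)
    (hg : DifferentiableAt ℝ g p) :
    fderiv ℝ (fun q => f q - g q) p e = fderiv ℝ f p e - fderiv ℝ g p e := by
  rw [fderiv_fun_sub hf hg]; rfl

theorem dd_mul' {f g : ℝ × ℝ → ℝ} {p : ℝ × ℝ} (e : ℝ × ℝ) (hf : DifferentiableAt ℝ f p)
    (hg : DifferentiableAt ℝ g p) :
    fderiv ℝ (fun q => f q * g q) p e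
      = f p * fderiv ℝ g p e + g p * fderiv ℝ f p e := by
  rw [fderiv_fun_mul hf hg]; simp

theorem dd_const_mul' {f : ℝ × ℝ → ℝ} {p : ℝ × ℝ} (e : ℝ × ℝ) (c : ℝ)
    (hf : DifferentiableAt ℝ f p) :
    fderiv ℝ (fun q => c * f q) p e = c * fderiv ℝ f p e := by
  rw [fderiv_const_mul hf]; simp

theorem dd_inv' {g : ℝ × ℝ → ℝ} {p : ℝ × ℝ} (e : ℝ × ℝ)
    (hg : DifferentiableAt ℝ g p) (hg0 : g p ≠ 0) :
    fderiv ℝ (fun q => (g q)⁻¹) p e = -(fderiv ℝ g p e) / (g p) ^ 2 := by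
  have h := ((hasDerivAt_inv hg0).comp_hasFDerivAt p hg.hasFDerivAt).fderiv
  have h2 : (fun q => (g q)⁻¹) = (fun y : ℝ => y⁻¹) ∘ g := rfl
  rw [h2, h]; simp; ring

theorem dd_div' {f g : ℝ × ℝ → ℝ} {p : ℝ × ℝ} (e : ℝ × ℝ) (hf : DifferentiableAt ℝ f p)
    (hg : DifferentiableAt ℝ g p) (hg0 : g p ≠ 0) :
    fderiv ℝ (fun q => f q / g q) p e
      = (fderiv ℝ f p e * g p - f p * fderiv ℝ g p e) / (g p) ^ 2 := by
  have h1 : (fun q => f q / g q) = fun q => f q * (g q)⁻¹ := by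
    funext q; rw [div_eq_mul_inv]
  rw [h1, dd_mul' e hf (hg.fun_inv hg0), dd_inv' e hg hg0]
  field_simp; ring

theorem contDiff_dd {f : ℝ × ℝ → ℝ} {n m : ℕ} (hf : ContDiff ℝ n f) (h : m + 1 ≤ n)
    (e : ℝ × ℝ) : ContDiff ℝ m (fun p => fderiv ℝ f p e) := by
  have h1 : ContDiff ℝ m (fderiv ℝ f) := hf.fderiv_right (by exact_mod_cast h)
  exact (ContinuousLinearMap.apply ℝ ℝ e).contDiff.comp h1

theorem contDiffAt_dd {f : ℝ × ℝ → ℝ} {p : ℝ × ℝ} {n m : ℕ} (hf : ContDiffAt ℝ n f p)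
    (h : m + 1 ≤ n) (e : ℝ × ℝ) : ContDiffAt ℝ m (fun q => fderiv ℝ f q e) p := by
  have h1 : ContDiffAt ℝ m (fderiv ℝ f) p := hf.fderiv_right (by exact_mod_cast h)
  exact (ContinuousLinearMap.apply ℝ ℝ e).contDiff.contDiffAt.comp p h1

theorem diffAt_div {f g : ℝ × ℝ → ℝ} {p : ℝ × ℝ} (hf : DifferentiableAt ℝ f p)
    (hg : DifferentiableAt ℝ g p) (hg0 : g p ≠ 0) :
    DifferentiableAt ℝ (fun q => f q / g q) p := by
  have h1 : (fun q => f q / g q) = fun q => f q * (g q)⁻¹ := by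
    funext q; rw [div_eq_mul_inv]
  rw [h1]; exact hf.mul (hg.inv hg0)

theorem diffAt_dd {f : ℝ × ℝ → ℝ} {p : ℝ × ℝ} (hf : ContDiffAt ℝ 2 f p) (e : ℝ × ℝ) :
    DifferentiableAt ℝ (fun q => fderiv ℝ f q e) p := by
  have h1 : ContDiffAt ℝ 1 (fderiv ℝ f) p := hf.fderiv_right (by norm_num)
  exact ((ContinuousLinearMap.apply ℝ ℝ e).contDiff.contDiffAt.comp p h1).differentiableAt
    (by norm_num)

theorem dd_swap {f : ℝ × ℝ → ℝ} {p : ℝ × ℝ} (hf : ContDiffAt ℝ 2 f p) (e e' : ℝ × ℝ) :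
    fderiv ℝ (fun q => fderiv ℝ f q e) p e' = fderiv ℝ (fun q => fderiv ℝ f q e') p e := by
  have hsym := hf.isSymmSndFDerivAt (by simp)
  have hdiff : DifferentiableAt ℝ (fderiv ℝ f) p := by
    have h0 : ContDiffAt ℝ 1 (fderiv ℝ f) p := hf.fderiv_right (by norm_num)
    exact h0.differentiableAt (by norm_num)
  have h1 : ∀ w w' : ℝ × ℝ, fderiv ℝ (fun q => fderiv ℝ f q w) p w'
      = fderiv ℝ (fderiv ℝ f) p w' w := by
    intro w w'
    have h2 : (fun q => fderiv ℝ f q w) = (ContinuousLinearMap.apply ℝ ℝ w) ∘ (fderiv ℝ f) := rfl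
    rw [h2, fderiv_comp p (ContinuousLinearMap.apply ℝ ℝ w).differentiableAt hdiff]
    simp
  rw [h1, h1]
  exact hsym.eq e' e

theorem boundary_deriv {f : ℝ × ℝ → ℝ} (hf : Differentiable ℝ f) (c x : ℝ) :
    HasDerivAt (fun t => f (t, c)) (px f (x, c)) x := by
  have h1 : HasDerivAt (fun t : ℝ => (t, c)) ((1 : ℝ), (0 : ℝ)) x :=
    (hasDerivAt_id x).prodMk (hasDerivAt_const x c)
  exact (hf (x, c)).hasFDerivAt.comp_hasDerivAt x h1

theorem dd_ratA {F G H K : ℝ × ℝ → ℝ} {p : ℝ × ℝ} (e : ℝ × ℝ)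
    (hF : DifferentiableAt ℝ F p) (hG : DifferentiableAt ℝ G p)
    (hH : DifferentiableAt ℝ H p) (hK : DifferentiableAt ℝ K p)
    (hD0 : F p * F p + H p * H p ≠ 0) :
    fderiv ℝ (fun q => (F q * G q + H q * K q) / (F q * F q + H q * H q)) p e
      = ((F p * fderiv ℝ G p e + G p * fderiv ℝ F p e
          + (H p * fderiv ℝ K p e + K p * fderiv ℝ H p e)) * (F p * F p + H p * H p)
         - (F p * G p + H p * K p)
            * (F p * fderiv ℝ F p e + F p * fderiv ℝ F p e
               + (H p * fderiv ℝ H p e + H p * fderiv ℝ H p e)))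
        / (F p * F p + H p * H p) ^ 2 := by
  rw [dd_div' e ((hF.fun_mul hG).fun_add (hH.fun_mul hK)) ((hF.fun_mul hF).fun_add (hH.fun_mul hH)) hD0,
    dd_add' e (hF.fun_mul hG) (hH.fun_mul hK), dd_add' e (hF.fun_mul hF) (hH.fun_mul hH),
    dd_mul' e hF hG, dd_mul' e hH hK, dd_mul' e hF hF, dd_mul' e hH hH]

theorem dd_ratB {F G H K : ℝ × ℝ → ℝ} {p : ℝ × ℝ} (e : ℝ × ℝ)
    (hF : DifferentiableAt ℝ F p) (hG : DifferentiableAt ℝ G p)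
    (hH : DifferentiableAt ℝ H p) (hK : DifferentiableAt ℝ K p)
    (hD0 : F p * F p + H p * H p ≠ 0) :
    fderiv ℝ (fun q => (F q * K q - H q * G q) / (F q * F q + H q * H q)) p e
      = ((F p * fderiv ℝ K p e + K p * fderiv ℝ F p e
          - (H p * fderiv ℝ G p e + G p * fderiv ℝ H p e)) * (F p * F p + H p * H p)
         - (F p * K p - H p * G p)
            * (F p * fderiv ℝ F p e + F p * fderiv ℝ F p e
               + (H p * fderiv ℝ H p e + H p * fderiv ℝ H p e)))
        / (F p * F p + H p * H p) ^ 2 := by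
  rw [dd_div' e ((hF.fun_mul hK).fun_sub (hH.fun_mul hG)) ((hF.fun_mul hF).fun_add (hH.fun_mul hH)) hD0,
    dd_sub' e (hF.fun_mul hK) (hH.fun_mul hG), dd_add' e (hF.fun_mul hF) (hH.fun_mul hH),
    dd_mul' e hF hK, dd_mul' e hH hG, dd_mul' e hF hF, dd_mul' e hH hH]

set_option maxHeartbeats 1000000 in
theorem decay_est (gam : ℝ) {dl eps a b c d h : ℝ} (hd1 : dl ≤ 1/4) (hd0 : 0 ≤ dl)
    (hKe : dl * (6 * (1 + |1 - gam|) + |gam|) ≤ eps)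
    (ha : |a| ≤ dl) (hb : |b - 1| ≤ dl) (hc : |c| ≤ dl) (hd : |d - (1 - gam)| ≤ dl)
    (hh : |h| ≤ dl) :
    |(a * c + b * d) / (a ^ 2 + b ^ 2) - (1 - gam) + gam * h|
      + |(a * d - b * c) / (a ^ 2 + b ^ 2)| ≤ eps := by
  set g := |1 - gam| with hg
  have hg0 : 0 ≤ g := abs_nonneg _
  have hb' := abs_le.1 hb
  have hD : (9:ℝ)/16 ≤ a ^ 2 + b ^ 2 := by nlinarith [sq_nonneg a]
  have hDpos : (0:ℝ) < a ^ 2 + b ^ 2 := by linarith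
  have hb5 : |b| ≤ 5/4 := by rw [abs_le]; constructor <;> nlinarith
  have hN1 : |a * c + b * d - (1 - gam) * (a ^ 2 + b ^ 2)| ≤ 3/2 * dl * (1 + g) := by
    have e0 : a * c + b * d - (1 - gam) * (a ^ 2 + b ^ 2)
        = a * c + b * (d - (1 - gam)) - (1 - gam) * (b * (b - 1) + a ^ 2) := by ring
    rw [e0]
    have t1 : |a * c + b * (d - (1 - gam)) - (1 - gam) * (b * (b - 1) + a ^ 2)|
        ≤ |a| * |c| + |b| * |d - (1 - gam)| + g * (|b| * |b - 1| + a ^ 2) := by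
      calc _ ≤ |a * c + b * (d - (1 - gam))| + |(1 - gam) * (b * (b - 1) + a ^ 2)| :=
              abs_sub _ _
        _ ≤ |a * c| + |b * (d - (1 - gam))| + |(1 - gam)| * |b * (b - 1) + a ^ 2| := by
              have := abs_add_le (a * c) (b * (d - (1 - gam)))
              rw [abs_mul (1 - gam)]; linarith
        _ ≤ |a| * |c| + |b| * |d - (1 - gam)| + g * (|b| * |b - 1| + a ^ 2) := by
              rw [abs_mul, abs_mul]
              have h3 : |b * (b - 1) + a ^ 2| ≤ |b| * |b - 1| + a ^ 2 := by
                calc _ ≤ |b * (b - 1)| + |a ^ 2| := abs_add_le _ _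
                  _ = |b| * |b - 1| + a ^ 2 := by rw [abs_mul, abs_sq]
              nlinarith
    have h4 : |a| * |c| ≤ dl * dl := mul_le_mul ha hc (abs_nonneg _) hd0
    have h5 : |b| * |d - (1 - gam)| ≤ 5/4 * dl := mul_le_mul hb5 hd (abs_nonneg _) (by norm_num)
    have h6 : |b| * |b - 1| ≤ 5/4 * dl := mul_le_mul hb5 hb (abs_nonneg _) (by norm_num)
    have h7 : a ^ 2 ≤ dl * dl := by nlinarith [abs_le.1 ha, sq_abs a]
    have d1 : dl * dl ≤ 1/4 * dl := by nlinarith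
    have h8 : g * (|b| * |b - 1| + a ^ 2) ≤ g * (3/2 * dl) :=
      mul_le_mul_of_nonneg_left (by linarith) hg0
    linarith [h8]
  have hN2 : |a * d - b * c| ≤ 3/2 * dl * (1 + g) := by
    have e0 : a * d - b * c = a * (d - (1 - gam)) + (1 - gam) * a - b * c := by ring
    rw [e0]
    have t1 : |a * (d - (1 - gam)) + (1 - gam) * a - b * c|
        ≤ |a| * |d - (1 - gam)| + g * |a| + |b| * |c| := by
      calc _ ≤ |a * (d - (1 - gam)) + (1 - gam) * a| + |b * c| := abs_sub _ _
        _ ≤ |a * (d - (1 - gam))| + |(1 - gam) * a| + |b * c| := by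
              have := abs_add_le (a * (d - (1 - gam))) ((1 - gam) * a); linarith
        _ = |a| * |d - (1 - gam)| + g * |a| + |b| * |c| := by
              rw [abs_mul, abs_mul, abs_mul]
    have h4 : |a| * |d - (1 - gam)| ≤ dl * dl := mul_le_mul ha hd (abs_nonneg _) hd0
    have h5 : g * |a| ≤ g * dl := mul_le_mul_of_nonneg_left ha hg0
    have h6 : |b| * |c| ≤ 5/4 * dl := mul_le_mul hb5 hc (abs_nonneg _) (by norm_num)
    have d1 : dl * dl ≤ 1/4 * dl := by nlinarith
    linarith [mul_nonneg hg0 hd0]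
  have hP : |(a * c + b * d) / (a ^ 2 + b ^ 2) - (1 - gam) + gam * h|
      ≤ (3/2 * dl * (1 + g)) * (16/9) + |gam| * dl := by
    have e0 : (a * c + b * d) / (a ^ 2 + b ^ 2) - (1 - gam) + gam * h
        = (a * c + b * d - (1 - gam) * (a ^ 2 + b ^ 2)) / (a ^ 2 + b ^ 2) + gam * h := by
      field_simp
    rw [e0]
    calc _ ≤ |(a * c + b * d - (1 - gam) * (a ^ 2 + b ^ 2)) / (a ^ 2 + b ^ 2)| + |gam * h| :=
            abs_add_le _ _
      _ ≤ (3/2 * dl * (1 + g)) * (16/9) + |gam| * dl := by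
            rw [abs_div, abs_mul, abs_of_pos hDpos, div_eq_mul_inv]
            have hi : (a ^ 2 + b ^ 2)⁻¹ ≤ 16/9 := by
              rw [inv_le_comm₀ hDpos (by norm_num)]; linarith
            have := mul_le_mul hN1 hi (by positivity) (by positivity)
            have h8 : |gam| * |h| ≤ |gam| * dl := mul_le_mul_of_nonneg_left hh (abs_nonneg _)
            linarith
  have hQ : |(a * d - b * c) / (a ^ 2 + b ^ 2)| ≤ (3/2 * dl * (1 + g)) * (16/9) := by
    rw [abs_div, abs_of_pos hDpos, div_eq_mul_inv]
    have hi : (a ^ 2 + b ^ 2)⁻¹ ≤ 16/9 := by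
      rw [inv_le_comm₀ hDpos (by norm_num)]; linarith
    exact mul_le_mul hN2 hi (by positivity) (by positivity)
  linarith [mul_nonneg hd0 hg0, mul_nonneg (abs_nonneg gam) hd0]

end WWProof

open WWProof Topology Filter

/-- Properties of the velocity field `(u,v)` in conformal variables: both
components are harmonic, satisfy the incompressibility and vorticity relations,
the kinematic and dynamic surface conditions, vanish (for `v`) on the bottom,
and tend to the laminar flow at infinity uniformly in `y`. -/
theorem velocity_field_properties (γ α : ℝ) (η ζ : ℝ × ℝ → ℝ)
    (hsol : IsWWSolution γ α η ζ) (u v : ℝ × ℝ → ℝ)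
    (hu : ∀ p : ℝ × ℝ, u p =
      (px η p * px ζ p + py η p * py ζ p) / ((px η p) ^ 2 + (py η p) ^ 2) + γ * η p)
    (hv : ∀ p : ℝ × ℝ, v p =
      (px η p * py ζ p - py η p * px ζ p) / ((px η p) ^ 2 + (py η p) ^ 2)) :
    (∀ p ∈ stripR, px (px u) p + py (py u) p = 0) ∧
    (∀ p ∈ stripR, px (px v) p + py (py v) p = 0) ∧
    (∀ p ∈ stripR, px u p + py v p = γ * px η p) ∧
    (∀ p ∈ stripR, py u p - px v p = γ * py η p) ∧
    (∀ x : ℝ, u (x, 1) * px η (x, 1) - v (x, 1) * py η (x, 1) = 0) ∧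
    (∀ x : ℝ, (u (x, 1)) ^ 2 + (v (x, 1)) ^ 2 + 2 * α * (η (x, 1) - 1) = 1) ∧
    (∀ x : ℝ, v (x, 0) = 0) ∧
    (∀ ε > 0, ∃ M : ℝ, ∀ p : ℝ × ℝ, M ≤ |p.1| → p.2 ∈ Set.Icc (0:ℝ) 1 →
      |u p - ((1 - γ) + γ * p.2)| + |v p| ≤ ε) := by
  obtain ⟨hη3, hζ3, hbdd, hharmη, hharmζ, hkin, hdyn, hbotη, hbotζ, hdecay, hnondeg⟩ := hsol
  obtain ⟨c, hcpos, hnd⟩ := hnondeg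
  have hηd : Differentiable ℝ η := hη3.differentiable (by norm_num)
  have hζd : Differentiable ℝ ζ := hζ3.differentiable (by norm_num)
  have hpxη2 : ContDiff ℝ 2 (px η) := contDiff_dd hη3 (by norm_num) (1, 0)
  have hpyη2 : ContDiff ℝ 2 (py η) := contDiff_dd hη3 (by norm_num) (0, 1)
  have hpxζ2 : ContDiff ℝ 2 (px ζ) := contDiff_dd hζ3 (by norm_num) (1, 0)
  have hpyζ2 : ContDiff ℝ 2 (py ζ) := contDiff_dd hζ3 (by norm_num) (0, 1)
  have hpxηd : Differentiable ℝ (px η) := hpxη2.differentiable (by norm_num)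
  have hpyηd : Differentiable ℝ (py η) := hpyη2.differentiable (by norm_num)
  have hpxζd : Differentiable ℝ (px ζ) := hpxζ2.differentiable (by norm_num)
  have hpyζd : Differentiable ℝ (py ζ) := hpyζ2.differentiable (by norm_num)
  have huA : u = fun q => (px η q * px ζ q + py η q * py ζ q)
      / (px η q * px η q + py η q * py η q) + γ * η q := by
    funext q; rw [hu q, pow_two, pow_two]
  have hvB : v = fun q => (px η q * py ζ q - py η q * px ζ q)
      / (px η q * px η q + py η q * py η q) := by
    funext q; rw [hv q, pow_two, pow_two]
  have hopen : IsOpen stripR := by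
    have : stripR = Prod.snd ⁻¹' Set.Ioo (0:ℝ) 1 := rfl
    rw [this]; exact isOpen_Ioo.preimage continuous_snd
  have hDne : ∀ p ∈ stripR, px η p * px η p + py η p * py η p ≠ 0 := by
    intro p hp h0
    have h1 := hnd p hp
    have h2 : (px η p) ^ 2 + (py η p) ^ 2 = 0 := by rw [pow_two, pow_two]; exact h0
    rw [h2, mul_zero] at h1
    linarith
  -- ζ boundary derivative relations
  have hζx_top : ∀ x : ℝ, px ζ (x, 1) = -(γ * η (x, 1) * px η (x, 1)) := by
    intro x
    have h1 : HasDerivAt (fun t => ζ (t, 1)) (px ζ (x, 1)) x := boundary_deriv hζd 1 x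
    have h3 : HasDerivAt (fun t => η (t, 1)) (px η (x, 1)) x := boundary_deriv hηd 1 x
    have h4 : HasDerivAt (fun t => 1 - γ / 2 - γ / 2 * (η (t, 1)) ^ 2)
        (-(γ * η (x, 1) * px η (x, 1))) x := by
      have h5 := ((h3.fun_pow 2).const_mul (γ / 2)).const_sub (1 - γ / 2)
      refine h5.congr_deriv ?_
      push_cast
      ring
    have h5 : (fun t => ζ (t, 1)) = fun t => 1 - γ / 2 - γ / 2 * (η (t, 1)) ^ 2 :=
      funext fun t => hkin t
    rw [h5] at h1
    exact h1.unique h4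
  have hηx_bot : ∀ x : ℝ, px η (x, 0) = 0 := by
    intro x
    have h1 : HasDerivAt (fun t => η (t, 0)) (px η (x, 0)) x := boundary_deriv hηd 0 x
    have h5 : (fun t => η (t, 0)) = fun _ => (0:ℝ) := funext fun t => hbotη t
    rw [h5] at h1
    exact h1.unique (hasDerivAt_const x 0)
  have hζx_bot : ∀ x : ℝ, px ζ (x, 0) = 0 := by
    intro x
    have h1 : HasDerivAt (fun t => ζ (t, 0)) (px ζ (x, 0)) x := boundary_deriv hζd 0 x
    have h5 : (fun t => ζ (t, 0)) = fun _ => (0:ℝ) := funext fun t => hbotζ t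
    rw [h5] at h1
    exact h1.unique (hasDerivAt_const x 0)
  -- nondegeneracy on the top boundary by continuity
  have hDtop : ∀ x : ℝ, (px η (x, 1)) ^ 2 + (py η (x, 1)) ^ 2 ≠ 0 := by
    intro x h0
    have hcont : Continuous (fun p : ℝ × ℝ =>
        (1 - 2 * α * (η p - 1)) ^ 2 * ((px η p) ^ 2 + (py η p) ^ 2)) := by
      have h1 : Continuous (px η) := hpxη2.continuous
      have h2 : Continuous (py η) := hpyη2.continuous
      have h3 : Continuous η := hη3.continuous
      fun_prop
    have hchain : ∀ n : ℕ, (x, 1 - 1/((n:ℝ)+2)) ∈ stripR := by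
      intro n
      have h2 : (0:ℝ) < (n:ℝ) + 2 := by positivity
      have h3 : 0 < 1/((n:ℝ)+2) := by positivity
      have h4 : 1/((n:ℝ)+2) ≤ 1/2 := by
        rw [div_le_div_iff₀ h2 (by norm_num)]; push_cast; linarith [Nat.cast_nonneg (α := ℝ) n]
      exact ⟨by linarith, by linarith⟩
    have ha : Filter.Tendsto (fun n : ℕ => (n:ℝ) + 2) Filter.atTop Filter.atTop :=
      Filter.tendsto_atTop_add_const_right _ 2 tendsto_natCast_atTop_atTop
    have hb := ha.inv_tendsto_atTop
    have hc2 : Filter.Tendsto (fun n : ℕ => 1 - 1/((n:ℝ)+2)) Filter.atTop (𝓝 1) := by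
      have := tendsto_const_nhds.sub (f := fun n : ℕ => (1:ℝ)) hb
      simpa [one_div] using this
    have htend : Filter.Tendsto (fun n : ℕ => ((x, 1 - 1/((n:ℝ)+2)) : ℝ × ℝ))
        Filter.atTop (𝓝 (x, 1)) := tendsto_const_nhds.prodMk_nhds hc2
    have hle : c ≤ (1 - 2 * α * (η (x,1) - 1)) ^ 2 * ((px η (x,1)) ^ 2 + (py η (x,1)) ^ 2) := by
      have := ge_of_tendsto ((hcont.tendsto (x, 1)).comp htend)
        (Filter.Eventually.of_forall fun n => hnd _ (hchain n))
      simpa using this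
    rw [h0, mul_zero] at hle
    linarith
  -- ================== part (iii) : kinematic on top ==================
  have part3 : ∀ x : ℝ, u (x, 1) * px η (x, 1) - v (x, 1) * py η (x, 1) = 0 := by
    intro x
    have hD := hDtop x
    have hk := hζx_top x
    rw [hu, hv]
    field_simp
    linear_combination ((px η (x,1))^2 + (py η (x,1))^2) * hk
  -- ================== part (iv) : dynamic on top ==================
  have part4 : ∀ x : ℝ, (u (x, 1)) ^ 2 + (v (x, 1)) ^ 2 + 2 * α * (η (x, 1) - 1) = 1 := by
    intro x
    have hD := hDtop x
    have hk := hζx_top x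
    have hdy := hdyn x
    rw [hu, hv]
    field_simp
    linear_combination ((px η (x,1))^2 + (py η (x,1))^2) * hdy
      + ((px η (x,1))^2 + (py η (x,1))^2) * (px ζ (x,1) + γ * η (x,1) * px η (x,1)) * hk
  -- ================== part (v) : bottom ==================
  have part5 : ∀ x : ℝ, v (x, 0) = 0 := by
    intro x
    rw [hv]
    rw [hηx_bot x, hζx_bot x]
    simp
  -- ================== part (ii) : divergence / vorticity relations ==================
  have part2a : ∀ p ∈ stripR, px u p + py v p = γ * px η p := by
    intro p hp
    have hD0 := hDne p hp
    have e1 : px u p =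
        ((px η p * px (px ζ) p + px ζ p * px (px η) p
          + (py η p * px (py ζ) p + py ζ p * px (py η) p)) * (px η p * px η p + py η p * py η p)
         - (px η p * px ζ p + py η p * py ζ p)
            * (px η p * px (px η) p + px η p * px (px η) p
               + (py η p * px (py η) p + py η p * px (py η) p)))
        / (px η p * px η p + py η p * py η p) ^ 2 + γ * px η p := by
      show fderiv ℝ u p (1, 0) = _
      rw [huA, dd_add' (1, 0)
        (diffAt_div (((hpxηd p).fun_mul (hpxζd p)).fun_add ((hpyηd p).fun_mul (hpyζd p)))
          (((hpxηd p).fun_mul (hpxηd p)).fun_add ((hpyηd p).fun_mul (hpyηd p))) hD0)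
        ((hηd p).const_mul γ),
        dd_ratA (1, 0) (hpxηd p) (hpxζd p) (hpyηd p) (hpyζd p) hD0,
        dd_const_mul' (1, 0) γ (hηd p)]
      rfl
    have e2 : py v p =
        ((px η p * py (py ζ) p + py ζ p * py (px η) p
          - (py η p * py (px ζ) p + px ζ p * py (py η) p)) * (px η p * px η p + py η p * py η p)
         - (px η p * py ζ p - py η p * px ζ p)
            * (px η p * py (px η) p + px η p * py (px η) p
               + (py η p * py (py η) p + py η p * py (py η) p)))
        / (px η p * px η p + py η p * py η p) ^ 2 := by
      show fderiv ℝ v p (0, 1) = _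
      rw [hvB, dd_ratB (0, 1) (hpxηd p) (hpxζd p) (hpyηd p) (hpyζd p) hD0]
      rfl
    have hsymη : px (py η) p = py (px η) p :=
      dd_swap (hη3.contDiffAt.of_le (by norm_num)) (0, 1) (1, 0)
    have hsymζ : px (py ζ) p = py (px ζ) p :=
      dd_swap (hζ3.contDiffAt.of_le (by norm_num)) (0, 1) (1, 0)
    have hxxη : px (px η) p = -(py (py η) p) := by have h := hharmη p hp; linarith
    have hxxζ : px (px ζ) p = -(py (py ζ) p) := by have h := hharmζ p hp; linarith
    rw [e1, e2, hsymη, hsymζ, hxxη, hxxζ]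
    field_simp
    ring
  have part2b : ∀ p ∈ stripR, py u p - px v p = γ * py η p := by
    intro p hp
    have hD0 := hDne p hp
    have e1 : py u p =
        ((px η p * py (px ζ) p + px ζ p * py (px η) p
          + (py η p * py (py ζ) p + py ζ p * py (py η) p)) * (px η p * px η p + py η p * py η p)
         - (px η p * px ζ p + py η p * py ζ p)
            * (px η p * py (px η) p + px η p * py (px η) p
               + (py η p * py (py η) p + py η p * py (py η) p)))
        / (px η p * px η p + py η p * py η p) ^ 2 + γ * py η p := by
      show fderiv ℝ u p (0, 1) = _
      rw [huA, dd_add' (0, 1)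
        (diffAt_div (((hpxηd p).fun_mul (hpxζd p)).fun_add ((hpyηd p).fun_mul (hpyζd p)))
          (((hpxηd p).fun_mul (hpxηd p)).fun_add ((hpyηd p).fun_mul (hpyηd p))) hD0)
        ((hηd p).const_mul γ),
        dd_ratA (0, 1) (hpxηd p) (hpxζd p) (hpyηd p) (hpyζd p) hD0,
        dd_const_mul' (0, 1) γ (hηd p)]
      rfl
    have e2 : px v p =
        ((px η p * px (py ζ) p + py ζ p * px (px η) p
          - (py η p * px (px ζ) p + px ζ p * px (py η) p)) * (px η p * px η p + py η p * py η p)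
         - (px η p * py ζ p - py η p * px ζ p)
            * (px η p * px (px η) p + px η p * px (px η) p
               + (py η p * px (py η) p + py η p * px (py η) p)))
        / (px η p * px η p + py η p * py η p) ^ 2 := by
      show fderiv ℝ v p (1, 0) = _
      rw [hvB, dd_ratB (1, 0) (hpxηd p) (hpxζd p) (hpyηd p) (hpyζd p) hD0]
      rfl
    have hsymη : px (py η) p = py (px η) p :=
      dd_swap (hη3.contDiffAt.of_le (by norm_num)) (0, 1) (1, 0)
    have hsymζ : px (py ζ) p = py (px ζ) p :=
      dd_swap (hζ3.contDiffAt.of_le (by norm_num)) (0, 1) (1, 0)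
    have hxxη : px (px η) p = -(py (py η) p) := by have h := hharmη p hp; linarith
    have hxxζ : px (px ζ) p = -(py (py ζ) p) := by have h := hharmζ p hp; linarith
    rw [e1, e2, hsymη, hsymζ, hxxη, hxxζ]
    field_simp
    ring
  -- ================== part (i) : harmonicity ==================
  have huCD : ∀ p ∈ stripR, ContDiffAt ℝ 2 u p := by
    intro p hp
    have hD0 := hDne p hp
    rw [huA]
    exact (((hpxη2.contDiffAt.mul hpxζ2.contDiffAt).add
      (hpyη2.contDiffAt.mul hpyζ2.contDiffAt)).div
      ((hpxη2.contDiffAt.mul hpxη2.contDiffAt).add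
      (hpyη2.contDiffAt.mul hpyη2.contDiffAt)) hD0).add
      ((contDiff_const.mul (hη3.of_le (by norm_num))).contDiffAt)
  have hvCD : ∀ p ∈ stripR, ContDiffAt ℝ 2 v p := by
    intro p hp
    have hD0 := hDne p hp
    rw [hvB]
    exact ((hpxη2.contDiffAt.mul hpyζ2.contDiffAt).sub
      (hpyη2.contDiffAt.mul hpxζ2.contDiffAt)).div
      ((hpxη2.contDiffAt.mul hpxη2.contDiffAt).add
      (hpyη2.contDiffAt.mul hpyη2.contDiffAt)) hD0
  have part1u : ∀ p ∈ stripR, px (px u) p + py (py u) p = 0 := by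
    intro p hp
    have hmem : stripR ∈ 𝓝 p := hopen.mem_nhds hp
    have hpyvd : DifferentiableAt ℝ (py v) p :=
      diffAt_dd (hvCD p hp) (0, 1)
    have hpxvd : DifferentiableAt ℝ (px v) p :=
      diffAt_dd (hvCD p hp) (1, 0)
    have heq1 : px u =ᶠ[𝓝 p] fun q => γ * px η q - py v q :=
      Filter.eventuallyEq_of_mem hmem (fun q hq => by have h := part2a q hq; linarith)
    have heq2 : py u =ᶠ[𝓝 p] fun q => γ * py η q + px v q :=
      Filter.eventuallyEq_of_mem hmem (fun q hq => by have h := part2b q hq; linarith)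
    have e1 : px (px u) p = γ * px (px η) p - px (py v) p := by
      show fderiv ℝ (px u) p (1, 0) = _
      rw [heq1.fderiv_eq, dd_sub' (1, 0) ((hpxηd p).const_mul γ) hpyvd,
        dd_const_mul' (1, 0) γ (hpxηd p)]
      rfl
    have e2 : py (py u) p = γ * py (py η) p + py (px v) p := by
      show fderiv ℝ (py u) p (0, 1) = _
      rw [heq2.fderiv_eq, dd_add' (0, 1) ((hpyηd p).const_mul γ) hpxvd,
        dd_const_mul' (0, 1) γ (hpyηd p)]
      rfl
    have hswapv : px (py v) p = py (px v) p := dd_swap (hvCD p hp) (0, 1) (1, 0)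
    have hh := hharmη p hp
    rw [e1, e2, hswapv]
    linear_combination γ * hh
  have part1v : ∀ p ∈ stripR, px (px v) p + py (py v) p = 0 := by
    intro p hp
    have hmem : stripR ∈ 𝓝 p := hopen.mem_nhds hp
    have hpyud : DifferentiableAt ℝ (py u) p :=
      diffAt_dd (huCD p hp) (0, 1)
    have hpxud : DifferentiableAt ℝ (px u) p :=
      diffAt_dd (huCD p hp) (1, 0)
    have heq1 : px v =ᶠ[𝓝 p] fun q => py u q - γ * py η q :=
      Filter.eventuallyEq_of_mem hmem (fun q hq => by have h := part2b q hq; linarith)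
    have heq2 : py v =ᶠ[𝓝 p] fun q => γ * px η q - px u q :=
      Filter.eventuallyEq_of_mem hmem (fun q hq => by have h := part2a q hq; linarith)
    have e1 : px (px v) p = px (py u) p - γ * px (py η) p := by
      show fderiv ℝ (px v) p (1, 0) = _
      rw [heq1.fderiv_eq, dd_sub' (1, 0) hpyud ((hpyηd p).const_mul γ),
        dd_const_mul' (1, 0) γ (hpyηd p)]
      rfl
    have e2 : py (py v) p = γ * py (px η) p - py (px u) p := by
      show fderiv ℝ (py v) p (0, 1) = _
      rw [heq2.fderiv_eq, dd_sub' (0, 1) ((hpxηd p).const_mul γ) hpxud,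
        dd_const_mul' (0, 1) γ (hpxηd p)]
      rfl
    have hswapu : px (py u) p = py (px u) p := dd_swap (huCD p hp) (0, 1) (1, 0)
    have hswapη : px (py η) p = py (px η) p :=
      dd_swap (hη3.contDiffAt.of_le (by norm_num)) (0, 1) (1, 0)
    rw [e1, e2, hswapu, hswapη]
    ring
  -- ================== part (vi) : decay ==================
  have part6 : ∀ ε > 0, ∃ M : ℝ, ∀ p : ℝ × ℝ, M ≤ |p.1| → p.2 ∈ Set.Icc (0:ℝ) 1 →
      |u p - ((1 - γ) + γ * p.2)| + |v p| ≤ ε := by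
    have keybound : ∀ (f : ℝ × ℝ → ℝ) (p : ℝ × ℝ) (e : ℝ × ℝ), ‖e‖ ≤ 1 →
        |fderiv ℝ f p e| ≤ ‖iteratedFDeriv ℝ 1 f p‖ := by
      intro f p e he
      have h1 : fderiv ℝ f p e = iteratedFDeriv ℝ 1 f p ![e] := by
        rw [iteratedFDeriv_one_apply]; simp
      rw [h1, ← Real.norm_eq_abs]
      calc ‖iteratedFDeriv ℝ 1 f p ![e]‖
          ≤ ‖iteratedFDeriv ℝ 1 f p‖ * ∏ i : Fin 1, ‖(![e] : Fin 1 → ℝ × ℝ) i‖ :=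
            (iteratedFDeriv ℝ 1 f p).le_opNorm _
        _ ≤ ‖iteratedFDeriv ℝ 1 f p‖ * 1 := by
            apply mul_le_mul_of_nonneg_left _ (norm_nonneg _)
            simp [he]
        _ = _ := mul_one _
    have hne1 : ‖((1:ℝ), (0:ℝ))‖ ≤ 1 := by
      rw [Prod.norm_def]; simp
    have hne2 : ‖((0:ℝ), (1:ℝ))‖ ≤ 1 := by
      rw [Prod.norm_def]; simp
    have hw1 : ∀ (p e : ℝ × ℝ), fderiv ℝ (fun q : ℝ × ℝ => η q - q.2) p e
        = fderiv ℝ η p e - e.2 := by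
      intro p e
      have h2 : fderiv ℝ (fun q : ℝ × ℝ => η q - q.2) p
          = fderiv ℝ η p - ContinuousLinearMap.snd ℝ ℝ ℝ :=
        ((hηd p).hasFDerivAt.sub hasFDerivAt_snd).fderiv
      rw [h2]; rfl
    have hw2 : ∀ (p e : ℝ × ℝ), fderiv ℝ (fun q : ℝ × ℝ => ζ q - (1 - γ) * q.2) p e
        = fderiv ℝ ζ p e - (1 - γ) * e.2 := by
      intro p e
      have h2 : fderiv ℝ (fun q : ℝ × ℝ => ζ q - (1 - γ) * q.2) p
          = fderiv ℝ ζ p - (1 - γ) • ContinuousLinearMap.snd ℝ ℝ ℝ :=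
        ((hζd p).hasFDerivAt.sub (hasFDerivAt_snd.const_mul (1 - γ))).fderiv
      rw [h2]
      simp [ContinuousLinearMap.sub_apply]
    intro ε hε
    set K : ℝ := 6 * (1 + |1 - γ|) + |γ| with hKdef
    have hK0 : 0 < K := by positivity
    set δ : ℝ := min (1/4) (ε / K) with hδdef
    have hδpos : 0 < δ := lt_min (by norm_num) (div_pos hε hK0)
    obtain ⟨M0, hM0⟩ := hdecay 0 (by norm_num) δ hδpos
    obtain ⟨M1, hM1⟩ := hdecay 1 (by norm_num) δ hδpos
    refine ⟨max M0 M1, fun p hMp hIcc => ?_⟩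
    have h0 := hM0 p (le_trans (le_max_left _ _) hMp) hIcc
    have h1 := hM1 p (le_trans (le_max_right _ _) hMp) hIcc
    rw [norm_iteratedFDeriv_zero, norm_iteratedFDeriv_zero] at h0
    have hh : |η p - p.2| ≤ δ := by
      rw [Real.norm_eq_abs, Real.norm_eq_abs] at h0
      have := abs_nonneg (ζ p - (1 - γ) * p.2)
      linarith
    have hn1 : ‖iteratedFDeriv ℝ 1 (fun q : ℝ × ℝ => η q - q.2) p‖ ≤ δ := by
      have := norm_nonneg (iteratedFDeriv ℝ 1 (fun q : ℝ × ℝ => ζ q - (1 - γ) * q.2) p)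
      linarith
    have hn2 : ‖iteratedFDeriv ℝ 1 (fun q : ℝ × ℝ => ζ q - (1 - γ) * q.2) p‖ ≤ δ := by
      have := norm_nonneg (iteratedFDeriv ℝ 1 (fun q : ℝ × ℝ => η q - q.2) p)
      linarith
    have ha : |px η p| ≤ δ := by
      have h2 := keybound (fun q : ℝ × ℝ => η q - q.2) p (1, 0) hne1
      rw [hw1 p (1, 0)] at h2
      simpa [px_apply, py_apply] using le_trans h2 hn1
    have hb : |py η p - 1| ≤ δ := by
      have h2 := keybound (fun q : ℝ × ℝ => η q - q.2) p (0, 1) hne2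
      rw [hw1 p (0, 1)] at h2
      simpa [px_apply, py_apply] using le_trans h2 hn1
    have hc : |px ζ p| ≤ δ := by
      have h2 := keybound (fun q : ℝ × ℝ => ζ q - (1 - γ) * q.2) p (1, 0) hne1
      rw [hw2 p (1, 0)] at h2
      simpa [px_apply, py_apply] using le_trans h2 hn2
    have hd : |py ζ p - (1 - γ)| ≤ δ := by
      have h2 := keybound (fun q : ℝ × ℝ => ζ q - (1 - γ) * q.2) p (0, 1) hne2
      rw [hw2 p (0, 1)] at h2
      simpa [px_apply, py_apply] using le_trans h2 hn2
    have hup : u p - ((1 - γ) + γ * p.2)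
        = (px η p * px ζ p + py η p * py ζ p) / ((px η p) ^ 2 + (py η p) ^ 2)
          - (1 - γ) + γ * (η p - p.2) := by
      rw [hu p]; ring
    have hvp : v p = (px η p * py ζ p - py η p * px ζ p)
        / ((px η p) ^ 2 + (py η p) ^ 2) := hv p
    rw [hup, hvp]
    exact decay_est γ (min_le_left _ _) (le_of_lt hδpos)
      ((le_div_iff₀ hK0).mp (min_le_right _ _)) ha hb hc hd hh
  exact ⟨part1u, part1v, part2a, part2b, part3, part4, part5, part6⟩
end
end

section
/- Let (η, ζ) be a solution of the conformal water-wave system with parameters γ, α, with η and ζ even in x, and let v = (η_x ζ_y − η_y ζ_x)/(η_x² + η_y²) be the vertical velocity. If v < 0 at every point of Γ⁺ ∪ R⁺, then η_x < 0 at every point of Γ⁺ ∪ R⁺ (so the surface elevation is strictly decreasing to the right of the crest). -/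
noncomputable section

open Real MeasureTheory intervalIntegral

section aux
variable {f : ℝ × ℝ → ℝ}

lemma pv_eq (v : ℝ × ℝ) :
    (fun q => fderiv ℝ f q v) = (ContinuousLinearMap.apply ℝ ℝ v) ∘ (fderiv ℝ f) := rfl

lemma contDiff_pv (hf : ContDiff ℝ 3 f) (v : ℝ × ℝ) :
    ContDiff ℝ 2 (fun q => fderiv ℝ f q v) := by
  rw [pv_eq]
  exact (ContinuousLinearMap.apply ℝ ℝ v).contDiff.comp (hf.fderiv_right (by norm_num))

lemma hasFDerivAt_pv (hf : ContDiff ℝ 3 f) (v : ℝ × ℝ) (p : ℝ × ℝ) :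
    HasFDerivAt (fun q => fderiv ℝ f q v)
      ((ContinuousLinearMap.apply ℝ ℝ v).comp (fderiv ℝ (fderiv ℝ f) p)) p := by
  rw [pv_eq]
  exact (ContinuousLinearMap.apply ℝ ℝ v).hasFDerivAt.comp p
    ((((hf.fderiv_right (m := 2) (by norm_num)).differentiable (by norm_num)) p).hasFDerivAt)

lemma fderiv_pv (hf : ContDiff ℝ 3 f) (v w : ℝ × ℝ) (p : ℝ × ℝ) :
    fderiv ℝ (fun q => fderiv ℝ f q v) p w = fderiv ℝ (fderiv ℝ f) p w v :=
  by rw [(hasFDerivAt_pv hf v p).fderiv]; rfl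

lemma symm_snd (hf : ContDiff ℝ 3 f) (v w : ℝ × ℝ) (p : ℝ × ℝ) :
    fderiv ℝ (fderiv ℝ f) p v w = fderiv ℝ (fderiv ℝ f) p w v :=
  (hf.contDiffAt.isSymmSndFDerivAt (by norm_num)) v w

end aux

/-- The complex function `η_x - i η_y` (written via `+ I • (-η_y)`). -/
noncomputable def Fc (f : ℝ × ℝ → ℝ) : ℂ → ℂ :=
  fun z => ((px f (z.re, z.im) : ℝ) : ℂ) + Complex.I • (((-(py f (z.re, z.im)) : ℝ)) : ℂ)

lemma Fc_re (f : ℝ × ℝ → ℝ) (z : ℂ) : (Fc f z).re = px f (z.re, z.im) := by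
  simp [Fc, Complex.add_re, smul_eq_mul]

lemma continuous_Fc {f : ℝ × ℝ → ℝ} (hf : ContDiff ℝ 3 f) : Continuous (Fc f) := by
  have h1 : Continuous fun z : ℂ => (z.re, z.im) :=
    (Complex.continuous_re.prodMk Complex.continuous_im)
  have hx : Continuous (px f) := (contDiff_pv hf (1,0)).continuous
  have hy : Continuous (py f) := (contDiff_pv hf (0,1)).continuous
  exact ((Complex.continuous_ofReal.comp (hx.comp h1)).add
    ((Complex.continuous_ofReal.comp ((hy.comp h1).neg)).const_smul Complex.I))

lemma holo {f : ℝ × ℝ → ℝ} (hf : ContDiff ℝ 3 f) {z : ℂ}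
    (hharm : px (px f) (z.re, z.im) + py (py f) (z.re, z.im) = 0) :
    DifferentiableAt ℂ (Fc f) z := by
  have hp : ((z.re, z.im) : ℝ × ℝ) = (z.re, z.im) := rfl
  set D2 := fderiv ℝ (fderiv ℝ f) ((z.re, z.im) : ℝ × ℝ) with hD2
  set J : ℂ →L[ℝ] ℝ × ℝ := Complex.reCLM.prod Complex.imCLM with hJ
  set L1 : ℂ →L[ℝ] ℂ := Complex.ofRealCLM.comp
      (((ContinuousLinearMap.apply ℝ ℝ ((1:ℝ),(0:ℝ))).comp D2).comp J) with hL1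
  set L2 : ℂ →L[ℝ] ℂ := Complex.ofRealCLM.comp
      ((-((ContinuousLinearMap.apply ℝ ℝ ((0:ℝ),(1:ℝ))).comp D2)).comp J) with hL2
  have h1 : HasFDerivAt (fun z : ℂ => ((px f (z.re, z.im) : ℝ) : ℂ)) L1 z := by
    have h1' := (hasFDerivAt_pv hf (1,0) (J z)).comp z J.hasFDerivAt
    exact Complex.ofRealCLM.hasFDerivAt.comp z h1'
  have h2 : HasFDerivAt (fun z : ℂ => (((-(py f (z.re, z.im)) : ℝ)) : ℂ)) L2 z := by
    have h2' := ((hasFDerivAt_pv hf (0,1) (J z)).neg).comp z J.hasFDerivAt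
    exact Complex.ofRealCLM.hasFDerivAt.comp z h2'
  have hM : HasFDerivAt (Fc f) (L1 + Complex.I • L2) z := h1.add (h2.const_smul Complex.I)
  have ha : px (px f) (z.re, z.im) = D2 (1,0) (1,0) := fderiv_pv hf (1,0) (1,0) _
  have hd : py (py f) (z.re, z.im) = D2 (0,1) (0,1) := fderiv_pv hf (0,1) (0,1) _
  have hsym : D2 (0,1) (1,0) = D2 (1,0) (0,1) := symm_snd hf (0,1) (1,0) _
  have hharm' : D2 (0,1) (0,1) = -(D2 (1,0) (1,0)) := by
    rw [← ha, ← hd]; linarith [hharm]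
  set c : ℂ := ((D2 (1,0) (1,0) : ℝ) : ℂ) - ((D2 (1,0) (0,1) : ℝ) : ℂ) * Complex.I with hc
  have hval : ∀ w : ℂ, L1 w + Complex.I • L2 w = w * c := by
    intro w
    have hJw : J w = (w.re, w.im) := rfl
    have hw : ((w.re, w.im) : ℝ × ℝ) = w.re • ((1:ℝ),(0:ℝ)) + w.im • ((0:ℝ),(1:ℝ)) := by
      simp [Prod.ext_iff]
    have e0 : ∀ v : ℝ × ℝ, D2 ((w.re, w.im) : ℝ × ℝ) v
        = w.re * (D2 (1,0) v) + w.im * (D2 (0,1) v) := by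
      intro v
      rw [hw, map_add, D2.map_smul, D2.map_smul]
      simp
    have e1 : L1 w = ((w.re * (D2 (1,0) (1,0)) + w.im * (D2 (0,1) (1,0)) : ℝ) : ℂ) := by
      rw [hL1]
      simp only [ContinuousLinearMap.coe_comp', Function.comp_apply, hJw,
        ContinuousLinearMap.apply_apply, Complex.ofRealCLM_apply]
      rw [e0]
    have e2 : L2 w = ((-(w.re * (D2 (1,0) (0,1)) + w.im * (D2 (0,1) (0,1))) : ℝ) : ℂ) := by
      rw [hL2]
      simp only [ContinuousLinearMap.coe_comp', Function.comp_apply, hJw,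
        ContinuousLinearMap.neg_apply, ContinuousLinearMap.apply_apply, Complex.ofRealCLM_apply]
      rw [e0]
    rw [e1, e2, hsym, hharm', hc, smul_eq_mul]
    apply Complex.ext <;>
      simp [Complex.add_re, Complex.add_im, Complex.mul_re, Complex.mul_im] <;> ring
  have hEq : (ContinuousLinearMap.smulRight (1 : ℂ →L[ℂ] ℂ) c).restrictScalars ℝ
      = L1 + Complex.I • L2 := by
    apply ContinuousLinearMap.ext
    intro w
    show w • c = (L1 + Complex.I • L2) w
    rw [ContinuousLinearMap.add_apply, ContinuousLinearMap.smul_apply, hval w, smul_eq_mul,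
      mul_comm]
  exact (hasFDerivAt_of_restrictScalars ℝ hM hEq).differentiableAt

open Filter Topology in
lemma seq_mem (n : ℕ) : 0 < 1 - 1/((n:ℝ)+2) ∧ 1 - 1/((n:ℝ)+2) < 1 := by
  have h1 : (0:ℝ) < (n:ℝ) + 2 := by positivity
  constructor
  · have : 1/((n:ℝ)+2) ≤ 1/2 := by
      apply div_le_div_of_nonneg_left <;> [norm_num; norm_num; simp]
    linarith
  · have : 0 < 1/((n:ℝ)+2) := by positivity
    linarith

open Filter Topology in
lemma seq_tendsto (x : ℝ) {g : ℝ × ℝ → ℝ} (hg : Continuous g) :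
    Tendsto (fun n : ℕ => g (x, 1 - 1/((n:ℝ)+2))) atTop (𝓝 (g (x,1))) := by
  have h0 : Tendsto (fun n : ℕ => ((n:ℝ)+2)) atTop atTop :=
    tendsto_atTop_add_const_right _ 2 tendsto_natCast_atTop_atTop
  have h1 : Tendsto (fun n : ℕ => 1/((n:ℝ)+2)) atTop (𝓝 0) := by
    simpa [one_div, Pi.inv_def] using h0.inv_tendsto_atTop
  have h2 : Tendsto (fun n : ℕ => ((x, 1 - 1/((n:ℝ)+2)) : ℝ × ℝ)) atTop (𝓝 (x, 1)) := by
    apply Tendsto.prodMk_nhds tendsto_const_nhds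
    have := (tendsto_const_nhds (x := (1:ℝ)) (f := atTop (α := ℕ))).sub h1
    simpa using this
  exact (hg.tendsto _).comp h2

lemma hasDerivAt_slice {f : ℝ × ℝ → ℝ} (hf : ContDiff ℝ 3 f) (y₀ x : ℝ) :
    HasDerivAt (fun t => f (t, y₀)) (px f (x, y₀)) x := by
  have hin : HasDerivAt (fun t : ℝ => ((t, y₀) : ℝ × ℝ)) ((1:ℝ), (0:ℝ)) x :=
    HasDerivAt.prodMk (hasDerivAt_id x) (hasDerivAt_const x y₀)
  exact (((hf.differentiable (by norm_num)) (x, y₀)).hasFDerivAt).comp_hasDerivAt x hin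

lemma px_bottom {f : ℝ × ℝ → ℝ} (hf : ContDiff ℝ 3 f) (hb : ∀ x : ℝ, f (x, 0) = 0) (x : ℝ) :
    px f (x, 0) = 0 := by
  have h1 := hasDerivAt_slice hf 0 x
  have h2 : (fun t => f (t, (0:ℝ))) = fun _ => (0:ℝ) := funext hb
  rw [h2] at h1
  exact h1.unique (hasDerivAt_const _ _)

lemma px_left {f : ℝ × ℝ → ℝ} (hf : ContDiff ℝ 3 f)
    (he : ∀ x y : ℝ, f (-x, y) = f (x, y)) (y : ℝ) : px f (0, y) = 0 := by
  have h1 := hasDerivAt_slice hf y 0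
  have h2 : HasDerivAt (fun t : ℝ => f (-t, y)) (px f (0, y) * (-1)) 0 := by
    have hneg : HasDerivAt (fun t : ℝ => -t) (-1 : ℝ) 0 := (hasDerivAt_id 0).neg
    have h1' : HasDerivAt (fun t => f (t, y)) (px f (0, y)) (-(0:ℝ)) := by
      simpa using h1
    exact h1'.comp 0 hneg
  have h3 : (fun t : ℝ => f (-t, y)) = fun t => f (t, y) := funext fun t => he t y
  rw [h3] at h2
  have := h1.unique h2
  linarith

lemma abs_fderiv_le (g : ℝ × ℝ → ℝ) (p v : ℝ × ℝ) :
    |fderiv ℝ g p v| ≤ ‖iteratedFDeriv ℝ 1 g p‖ * ‖v‖ := by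
  have h := (iteratedFDeriv ℝ 1 g p).le_opNorm ![v]
  rw [iteratedFDeriv_one_apply] at h
  rw [← Real.norm_eq_abs]
  simpa using h

lemma norm_e1 : ‖(((1:ℝ),(0:ℝ)) : ℝ × ℝ)‖ = 1 := by
  simp [Prod.norm_def]

lemma norm_e2 : ‖(((0:ℝ),(1:ℝ)) : ℝ × ℝ)‖ = 1 := by
  simp [Prod.norm_def]

lemma fderiv_eta_sub {η : ℝ × ℝ → ℝ} (hη : ContDiff ℝ 3 η) (p v : ℝ × ℝ) :
    fderiv ℝ (fun q => η q - q.2) p v = fderiv ℝ η p v - v.2 := by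
  have h : HasFDerivAt (fun q : ℝ × ℝ => η q - q.2)
      (fderiv ℝ η p - ContinuousLinearMap.snd ℝ ℝ ℝ) p :=
    (((hη.differentiable (by norm_num)) p).hasFDerivAt).sub
      (ContinuousLinearMap.snd ℝ ℝ ℝ).hasFDerivAt
  rw [h.fderiv]; rfl

lemma fderiv_zeta_sub {ζ : ℝ × ℝ → ℝ} (hζ : ContDiff ℝ 3 ζ) (a : ℝ) (p v : ℝ × ℝ) :
    fderiv ℝ (fun q => ζ q - a * q.2) p v = fderiv ℝ ζ p v - a * v.2 := by
  have h2 : HasFDerivAt (fun q : ℝ × ℝ => a * q.2)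
      (a • ContinuousLinearMap.snd ℝ ℝ ℝ) p := by
    have := ((ContinuousLinearMap.snd ℝ ℝ ℝ).hasFDerivAt (x := p)).const_smul a
    exact this
  have h : HasFDerivAt (fun q : ℝ × ℝ => ζ q - a * q.2)
      (fderiv ℝ ζ p - a • ContinuousLinearMap.snd ℝ ℝ ℝ) p :=
    (((hζ.differentiable (by norm_num)) p).hasFDerivAt).sub h2
  rw [h.fderiv]
  simp [smul_eq_mul]

/-- Open rectangle `(0,X) × (0,1)` inside `ℂ`. -/
def rectU (X : ℝ) : Set ℂ := {w : ℂ | w.re ∈ Set.Ioo 0 X ∧ w.im ∈ Set.Ioo 0 1}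

lemma isOpen_rectU (X : ℝ) : IsOpen (rectU X) :=
  ((isOpen_Ioo.preimage Complex.continuous_re).inter (isOpen_Ioo.preimage Complex.continuous_im))

lemma convex_rectU (X : ℝ) : Convex ℝ (rectU X) := by
  intro z hz w hw a b ha hb hab
  constructor
  · have := (convex_Ioo (0:ℝ) X) hz.1 hw.1 ha hb hab
    simpa [Complex.add_re, Complex.smul_re] using this
  · have := (convex_Ioo (0:ℝ) 1) hz.2 hw.2 ha hb hab
    simpa [Complex.add_im, Complex.smul_im] using this

lemma isBounded_rectU (X : ℝ) : Bornology.IsBounded (rectU X) := by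
  apply (Metric.isBounded_closedBall (x := (0:ℂ)) (r := |X| + 1)).subset
  intro z hz
  simp only [Metric.mem_closedBall, Complex.dist_eq, sub_zero]
  calc ‖z‖ ≤ |z.re| + |z.im| := Complex.norm_le_abs_re_add_abs_im z
    _ ≤ |X| + 1 := by
        have h1 := hz.1.1; have h2 := hz.1.2; have h3 := hz.2.1; have h4 := hz.2.2
        rw [abs_of_pos h1, abs_of_pos h3]
        have : X ≤ |X| := le_abs_self X
        linarith

lemma frontier_rectU {X : ℝ} {z : ℂ} (hz : z ∈ frontier (rectU X)) :
    (z.re ∈ Set.Icc 0 X ∧ z.im ∈ Set.Icc 0 1) ∧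
      (z.re = 0 ∨ z.re = X ∨ z.im = 0 ∨ z.im = 1) := by
  have hcl : closure (rectU X) ⊆
      {w : ℂ | w.re ∈ Set.Icc 0 X ∧ w.im ∈ Set.Icc 0 1} := by
    apply closure_minimal
    · intro w hw
      exact ⟨⟨le_of_lt hw.1.1, le_of_lt hw.1.2⟩, ⟨le_of_lt hw.2.1, le_of_lt hw.2.2⟩⟩
    · exact ((isClosed_Icc.preimage Complex.continuous_re).inter
        (isClosed_Icc.preimage Complex.continuous_im))
  have h1 : z ∈ closure (rectU X) := hz.1
  have h2 : z ∉ rectU X := by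
    intro h
    exact hz.2 (((isOpen_rectU X).interior_eq).symm ▸ h)
  have hmem := hcl h1
  refine ⟨hmem, ?_⟩
  by_contra hcon
  push_neg at hcon
  apply h2
  obtain ⟨⟨hr1, hr2⟩, ⟨hi1, hi2⟩⟩ := hmem
  obtain ⟨e1, e2, e3, e4⟩ := hcon
  exact ⟨⟨lt_of_le_of_ne hr1 (Ne.symm e1), lt_of_le_of_ne hr2 e2⟩,
    ⟨lt_of_le_of_ne hi1 (Ne.symm e3), lt_of_le_of_ne hi2 e4⟩⟩

lemma norm_exp_Fc {η : ℝ × ℝ → ℝ} (w : ℂ) :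
    ‖Complex.exp (Fc η w)‖ = Real.exp (px η (w.re, w.im)) := by
  rw [Complex.norm_exp, Fc_re]

lemma rect_bound {η : ℝ × ℝ → ℝ} (hη : ContDiff ℝ 3 η)
    (hharm : ∀ p : ℝ × ℝ, 0 < p.2 → p.2 < 1 → px (px η) p + py (py η) p = 0)
    {X ε : ℝ}
    (hfront : ∀ z ∈ frontier (rectU X), px η (z.re, z.im) ≤ ε) :
    ∀ z ∈ closure (rectU X), px η (z.re, z.im) ≤ ε := by
  intro z hz
  set g : ℂ → ℂ := fun w => Complex.exp (Fc η w) with hg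
  have hd : DiffContOnCl ℂ g (rectU X) := by
    refine ⟨fun w hw => ?_, (Complex.continuous_exp.comp (continuous_Fc hη)).continuousOn⟩
    exact ((holo hη (hharm (w.re, w.im) hw.2.1 hw.2.2)).cexp).differentiableWithinAt
  have hc : ∀ w ∈ frontier (rectU X), ‖g w‖ ≤ Real.exp ε := by
    intro w hw
    rw [hg]
    rw [norm_exp_Fc]
    exact Real.exp_le_exp.mpr (hfront w hw)
  have hb := Complex.norm_le_of_forall_mem_frontier_norm_le (isBounded_rectU X) hd
    (C := Real.exp ε) hc hz
  rw [hg, norm_exp_Fc] at hb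
  exact Real.exp_le_exp.mp hb

lemma rect_eq {η : ℝ × ℝ → ℝ} (hη : ContDiff ℝ 3 η)
    (hharm : ∀ p : ℝ × ℝ, 0 < p.2 → p.2 < 1 → px (px η) p + py (py η) p = 0)
    {X : ℝ} {z₀ : ℂ} (hz₀ : z₀ ∈ rectU X)
    (hle : ∀ w ∈ rectU X, px η (w.re, w.im) ≤ px η (z₀.re, z₀.im)) :
    ∀ w ∈ rectU X, px η (w.re, w.im) = px η (z₀.re, z₀.im) := by
  set g : ℂ → ℂ := fun w => Complex.exp (Fc η w) with hg
  have hd : DifferentiableOn ℂ g (rectU X) := fun w hw =>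
    ((holo hη (hharm (w.re, w.im) hw.2.1 hw.2.2)).cexp).differentiableWithinAt
  have hmax : IsMaxOn (norm ∘ g) (rectU X) z₀ := by
    intro w hw
    simp only [Function.comp_apply, hg, norm_exp_Fc]
    exact Real.exp_le_exp.mpr (hle w hw)
  have heq := Complex.norm_eqOn_of_isPreconnected_of_isMaxOn
    (convex_rectU X).isPreconnected (isOpen_rectU X) hd hz₀ hmax
  intro w hw
  have h := heq hw
  simp only [Function.comp_apply, Function.const_apply, hg, norm_exp_Fc] at h
  exact Real.exp_injective h

lemma px_def (f : ℝ × ℝ → ℝ) (p : ℝ × ℝ) : px f p = fderiv ℝ f p (1, 0) := rfl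
lemma py_def (f : ℝ × ℝ → ℝ) (p : ℝ × ℝ) : py f p = fderiv ℝ f p (0, 1) := rfl


/-- If the vertical velocity is strictly negative on the right half of the
strip and its upper boundary, then so is `η_x`: the surface elevation is
strictly decreasing to the right of the crest. -/
theorem eta_monotone_of_v_neg (γ α : ℝ) (η ζ : ℝ × ℝ → ℝ)
    (hsol : IsWWSolution γ α η ζ)
    (hevenη : ∀ x y : ℝ, η (-x, y) = η (x, y))
    (hevenζ : ∀ x y : ℝ, ζ (-x, y) = ζ (x, y))
    (v : ℝ × ℝ → ℝ)
    (hv : ∀ p : ℝ × ℝ, v p =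
      (px η p * py ζ p - py η p * px ζ p) / ((px η p) ^ 2 + (py η p) ^ 2))
    (hvneg : ∀ p : ℝ × ℝ, 0 < p.1 → 0 < p.2 → p.2 ≤ 1 → v p < 0) :
    ∀ p : ℝ × ℝ, 0 < p.1 → 0 < p.2 → p.2 ≤ 1 → px η p < 0 := by
  obtain ⟨c, hc, hnd⟩ := hsol.nondeg
  have hη := hsol.smooth_η
  have hζ := hsol.smooth_ζ
  have hcpx : Continuous (px η) := (contDiff_pv hη (1,0)).continuous
  have hcpy : Continuous (py η) := (contDiff_pv hη (0,1)).continuous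
  have hcη : Continuous η := hη.continuous
  -- the nondegenerate quantity extends to the top boundary
  set G : ℝ × ℝ → ℝ :=
    fun p => (1 - 2 * α * (η p - 1)) ^ 2 * ((px η p) ^ 2 + (py η p) ^ 2) with hGdef
  have hGcont : Continuous G := by
    apply Continuous.mul
    · exact (continuous_const.sub (continuous_const.mul (hcη.sub continuous_const))).pow 2
    · exact (hcpx.pow 2).add (hcpy.pow 2)
  have hGtop : ∀ x : ℝ, c ≤ G (x, 1) := by
    intro x
    refine ge_of_tendsto' (seq_tendsto x hGcont) fun n => ?_
    have hm := seq_mem n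
    exact hnd (x, 1 - 1/((n:ℝ)+2)) ⟨hm.1, hm.2⟩
  have hS : ∀ x : ℝ, 0 < (px η (x,1)) ^ 2 + (py η (x,1)) ^ 2 := by
    intro x
    by_contra hcon
    push_neg at hcon
    have h1 : G (x,1) ≤ 0 :=
      mul_nonpos_of_nonneg_of_nonpos (sq_nonneg _) hcon
    linarith [hGtop x]
  -- the quantity Λ = ζ_y + γ η η_y on the top boundary
  set Λ : ℝ → ℝ := fun x => py ζ (x,1) + γ * η (x,1) * py η (x,1) with hΛdef
  have hin : Continuous (fun x : ℝ => ((x, 1) : ℝ × ℝ)) :=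
    continuous_id.prodMk continuous_const
  have hΛcont : Continuous Λ := by
    apply Continuous.add
    · exact ((contDiff_pv hζ (0,1)).continuous).comp hin
    · exact (continuous_const.mul (hcη.comp hin)).mul (hcpy.comp hin)
  have hΛne : ∀ x : ℝ, Λ x ≠ 0 := by
    intro x h0
    have hdyn := hsol.dynamic x
    have hΛx : Λ x ^ 2
        = (1 - 2 * α * (η (x,1) - 1)) * ((px η (x,1)) ^ 2 + (py η (x,1)) ^ 2) := hdyn
    rw [h0] at hΛx
    have hG0 : G (x,1) = 0 := by
      have he : G (x,1) = (1 - 2 * α * (η (x,1) - 1))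
          * ((1 - 2 * α * (η (x,1) - 1)) * ((px η (x,1)) ^ 2 + (py η (x,1)) ^ 2)) := by
        rw [hGdef]; ring
      rw [he, ← hΛx]
      ring
    linarith [hGtop x]
  -- Λ is positive far out
  have hΛfar : ∃ X : ℝ, 0 < Λ X := by
    set ε0 : ℝ := 1/(8*(1+|γ|)) with hε0def
    have hγ0 : (0:ℝ) < 1 + |γ| := by positivity
    have hε0pos : 0 < ε0 := by positivity
    have hε0le : ε0 ≤ 1/8 := by
      rw [hε0def]
      rw [div_le_div_iff₀ (by positivity) (by norm_num)]
      nlinarith [abs_nonneg γ]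
    have hγε : |γ| * ε0 ≤ 1/8 := by
      rw [hε0def]
      rw [mul_one_div, div_le_div_iff₀ (by positivity) (by norm_num)]
      nlinarith [abs_nonneg γ]
    obtain ⟨M0, hM0⟩ := hsol.decay 0 (by norm_num) ε0 hε0pos
    obtain ⟨M1, hM1⟩ := hsol.decay 1 (by norm_num) ε0 hε0pos
    set X : ℝ := max |M0| |M1| with hXdef
    have hXnn : 0 ≤ X := le_trans (abs_nonneg M0) (le_max_left _ _)
    have hXabs : |X| = X := abs_of_nonneg hXnn
    have hmem : ((X,1) : ℝ × ℝ).2 ∈ Set.Icc (0:ℝ) 1 := by norm_num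
    have h0 := hM0 (X,1) (by rw [hXabs]; exact le_trans (le_abs_self M0) (le_max_left _ _)) hmem
    have h1 := hM1 (X,1) (by rw [hXabs]; exact le_trans (le_abs_self M1) (le_max_right _ _)) hmem
    rw [norm_iteratedFDeriv_zero, norm_iteratedFDeriv_zero] at h0
    have hη1 : |η (X,1) - 1| ≤ ε0 := by
      have := norm_nonneg (ζ (X,1) - (1-γ) * ((X,1):ℝ×ℝ).2)
      have h0' := h0
      rw [Real.norm_eq_abs, Real.norm_eq_abs] at h0'
      simpa using (by linarith [abs_nonneg (ζ (X,1) - (1-γ) * ((X,1):ℝ×ℝ).2), h0'] :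
        |η (X,1) - ((X,1):ℝ×ℝ).2| ≤ ε0)
    have hitη : ‖iteratedFDeriv ℝ 1 (fun q : ℝ×ℝ => η q - q.2) (X,1)‖ ≤ ε0 := by
      have := norm_nonneg (iteratedFDeriv ℝ 1 (fun q : ℝ×ℝ => ζ q - (1-γ)*q.2) (X,1))
      linarith
    have hitζ : ‖iteratedFDeriv ℝ 1 (fun q : ℝ×ℝ => ζ q - (1-γ)*q.2) (X,1)‖ ≤ ε0 := by
      have := norm_nonneg (iteratedFDeriv ℝ 1 (fun q : ℝ×ℝ => η q - q.2) (X,1))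
      linarith
    have hpyη1 : |py η (X,1) - 1| ≤ ε0 := by
      have h2 := abs_fderiv_le (fun q : ℝ×ℝ => η q - q.2) (X,1) (0,1)
      rw [fderiv_eta_sub hη, norm_e2] at h2
      have h2' : |py η (X,1) - 1| ≤ ‖iteratedFDeriv ℝ 1 (fun q : ℝ×ℝ => η q - q.2) (X,1)‖ := by
        simpa [py_def] using h2
      exact le_trans h2' hitη
    have hpyζ1 : |py ζ (X,1) - (1-γ)| ≤ ε0 := by
      have h2 := abs_fderiv_le (fun q : ℝ×ℝ => ζ q - (1-γ)*q.2) (X,1) (0,1)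
      rw [fderiv_zeta_sub hζ, norm_e2] at h2
      have h2' : |py ζ (X,1) - (1-γ)|
          ≤ ‖iteratedFDeriv ℝ 1 (fun q : ℝ×ℝ => ζ q - (1-γ)*q.2) (X,1)‖ := by
        simpa [py_def] using h2
      exact le_trans h2' hitζ
    refine ⟨X, ?_⟩
    have hpyηb : |py η (X,1)| ≤ 9/8 := by
      have := abs_le.mp hpyη1
      rw [abs_le]
      constructor <;> linarith
    have hprod : |η (X,1) * py η (X,1) - 1| ≤ (17/8) * ε0 := by
      have he : η (X,1) * py η (X,1) - 1
          = (η (X,1) - 1) * py η (X,1) + (py η (X,1) - 1) := by ring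
      rw [he]
      calc |(η (X,1) - 1) * py η (X,1) + (py η (X,1) - 1)|
          ≤ |(η (X,1) - 1) * py η (X,1)| + |py η (X,1) - 1| := abs_add_le _ _
        _ = |η (X,1) - 1| * |py η (X,1)| + |py η (X,1) - 1| := by rw [abs_mul]
        _ ≤ ε0 * (9/8) + ε0 := by
            have := abs_nonneg (η (X,1) - 1)
            have := abs_nonneg (py η (X,1))
            nlinarith
        _ ≤ (17/8) * ε0 := by linarith
    have hγprod : |γ * (η (X,1) * py η (X,1) - 1)| ≤ 17/64 := by
      rw [abs_mul]
      calc |γ| * |η (X,1) * py η (X,1) - 1| ≤ |γ| * ((17/8) * ε0) := by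
            exact mul_le_mul_of_nonneg_left hprod (abs_nonneg γ)
        _ = (17/8) * (|γ| * ε0) := by ring
        _ ≤ (17/8) * (1/8) := by nlinarith
        _ ≤ 17/64 := by norm_num
    have hΛsub : Λ X - 1 = (py ζ (X,1) - (1-γ)) + γ * (η (X,1) * py η (X,1) - 1) := by
      rw [hΛdef]; ring
    have e1 := abs_le.mp hpyζ1
    have e2 := abs_le.mp hγprod
    have : Λ X - 1 ≥ -(ε0 + 17/64) := by rw [hΛsub]; linarith
    linarith
  -- Λ is positive everywhere
  have hΛpos : ∀ x : ℝ, 0 < Λ x := by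
    obtain ⟨X, hX⟩ := hΛfar
    intro x
    by_contra hcon
    push_neg at hcon
    have hlt : Λ x < 0 := lt_of_le_of_ne hcon (hΛne x)
    have hde := intermediate_value_uIcc (a := x) (b := X) (f := Λ) hΛcont.continuousOn
    have h0m : (0:ℝ) ∈ Set.uIcc (Λ x) (Λ X) := by
      rw [Set.mem_uIcc]
      left
      exact ⟨hlt.le, hX.le⟩
    obtain ⟨x₀, _, hx₀⟩ := hde h0m
    exact hΛne x₀ hx₀
  -- px ζ on the top boundary
  have hζx : ∀ x : ℝ, px ζ (x,1) = -(γ * η (x,1) * px η (x,1)) := by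
    intro x
    have h1 := hasDerivAt_slice hζ 1 x
    have hη1 := hasDerivAt_slice hη 1 x
    have hfull : HasDerivAt (fun t => 1 - γ/2 - γ/2 * (η (t,1))^2)
        (-(γ/2 * ((2:ℕ) * η (x,1) ^ 1 * px η (x,1)))) x :=
      ((hη1.pow 2).const_mul (γ/2)).const_sub (1 - γ/2)
    have h3 : (fun t => ζ (t,1)) = (fun t => 1 - γ/2 - γ/2 * (η (t,1))^2) :=
      funext hsol.kinematic
    rw [h3] at h1
    have := h1.unique hfull
    rw [this]
    push_cast
    ring
  -- strict negativity on the top boundary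
  have htop : ∀ x : ℝ, 0 < x → px η (x,1) < 0 := by
    intro x hx
    have hvv := hvneg (x,1) hx one_pos le_rfl
    rw [hv ((x,1) : ℝ × ℝ)] at hvv
    have hSx := hS x
    have hnum : px η (x,1) * py ζ (x,1) - py η (x,1) * px ζ (x,1) < 0 := by
      by_contra hnn
      push_neg at hnn
      exact absurd hvv (not_lt.mpr (div_nonneg hnn hSx.le))
    rw [hζx x] at hnum
    have hfin : px η (x,1) * Λ x < 0 := by
      have he : px η (x,1) * Λ x
          = px η (x,1) * py ζ (x,1) - py η (x,1) * (-(γ * η (x,1) * px η (x,1))) := by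
        rw [hΛdef]; ring
      rw [he]; exact hnum
    by_contra hcon
    push_neg at hcon
    exact absurd hfin (not_lt.mpr (mul_nonneg hcon (hΛpos x).le))
  -- boundary zeros
  have hbot : ∀ x : ℝ, px η (x,0) = 0 := px_bottom hη hsol.bottom_η
  have hleft : ∀ y : ℝ, px η (0,y) = 0 := px_left hη hevenη
  have hharm' : ∀ p : ℝ × ℝ, 0 < p.2 → p.2 < 1 → px (px η) p + py (py η) p = 0 :=
    fun p h1 h2 => hsol.harm_η p ⟨h1, h2⟩
  -- interior nonpositivity from the maximum principle
  have hint : ∀ p : ℝ × ℝ, 0 < p.1 → 0 < p.2 → p.2 < 1 → px η p ≤ 0 := by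
    intro p hp1 hp2 hp3
    have key : ∀ ε : ℝ, 0 < ε → px η p ≤ ε := by
      intro ε hε
      obtain ⟨M, hM⟩ := hsol.decay 1 (by norm_num) ε hε
      set X : ℝ := max (p.1 + 1) (|M| + 1) with hXdef
      have hXp : p.1 < X := lt_of_lt_of_le (by linarith) (le_max_left _ _)
      have hXnn : 0 < X := lt_of_lt_of_le (by positivity) (le_max_right _ _)
      have hXM : M ≤ |X| := by
        rw [abs_of_pos hXnn]
        calc M ≤ |M| := le_abs_self M
          _ ≤ X := le_trans (by linarith) (le_max_right _ _)
      have hright : ∀ y : ℝ, y ∈ Set.Icc (0:ℝ) 1 → px η (X, y) ≤ ε := by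
        intro y hy
        have h1 := hM (X,y) hXM hy
        have hitη : ‖iteratedFDeriv ℝ 1 (fun q : ℝ×ℝ => η q - q.2) (X,y)‖ ≤ ε := by
          have := norm_nonneg (iteratedFDeriv ℝ 1 (fun q : ℝ×ℝ => ζ q - (1-γ)*q.2) (X,y))
          linarith
        have h2 := abs_fderiv_le (fun q : ℝ×ℝ => η q - q.2) (X,y) (1,0)
        rw [fderiv_eta_sub hη, norm_e1, mul_one] at h2
        have h3 : |px η (X,y)| ≤ ε := by
          have h2' : |px η (X,y)| ≤ ‖iteratedFDeriv ℝ 1 (fun q : ℝ×ℝ => η q - q.2) (X,y)‖ := by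
            simpa [px_def] using h2
          exact le_trans h2' hitη
        exact le_trans (le_abs_self _) h3
      have hfront : ∀ z ∈ frontier (rectU X), px η (z.re, z.im) ≤ ε := by
        intro z hz
        obtain ⟨⟨hre, him⟩, hcases⟩ := frontier_rectU hz
        rcases hcases with h | h | h | h
        · rw [h, hleft z.im]; exact hε.le
        · rw [h]; exact hright z.im him
        · rw [h, hbot z.re]; exact hε.le
        · rcases lt_or_eq_of_le hre.1 with h' | h'
          · rw [h]; exact le_trans (htop z.re h').le hε.le
          · rw [← h', hleft z.im]; exact hε.le
      have hzp : (⟨p.1, p.2⟩ : ℂ) ∈ closure (rectU X) :=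
        subset_closure ⟨⟨hp1, hXp⟩, ⟨hp2, hp3⟩⟩
      have := rect_bound hη hharm' hfront _ hzp
      simpa using this
    by_contra hcon
    push_neg at hcon
    have := key (px η p / 2) (by linarith)
    linarith
  -- conclusion
  intro p hp1 hp2 hp3
  rcases lt_or_eq_of_le hp3 with hlt | heq
  · -- interior point: strictness via strong maximum principle
    by_contra hcon
    push_neg at hcon
    have hzero : px η p = 0 := le_antisymm (hint p hp1 hp2 hlt) hcon
    set X : ℝ := p.1 + 1 with hXdef
    have hzpU : (⟨p.1, p.2⟩ : ℂ) ∈ rectU X := ⟨⟨hp1, by rw [hXdef]; norm_num⟩, ⟨hp2, hlt⟩⟩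
    have hle : ∀ w ∈ rectU X,
        px η (w.re, w.im) ≤ px η ((⟨p.1, p.2⟩ : ℂ).re, (⟨p.1, p.2⟩ : ℂ).im) := by
      intro w hw
      have : px η ((⟨p.1, p.2⟩ : ℂ).re, (⟨p.1, p.2⟩ : ℂ).im) = 0 := hzero
      rw [this]
      exact hint (w.re, w.im) hw.1.1 hw.2.1 hw.2.2
    have heqOn := rect_eq hη hharm' hzpU hle
    have hzero' : ∀ n : ℕ, px η (p.1, 1 - 1/((n:ℝ)+2)) = 0 := by
      intro n
      have hm := seq_mem n
      have hw : (⟨p.1, 1 - 1/((n:ℝ)+2)⟩ : ℂ) ∈ rectU X :=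
        ⟨⟨hp1, by rw [hXdef]; norm_num⟩, ⟨hm.1, hm.2⟩⟩
      have h2 := heqOn _ hw
      simpa [hzero] using h2
    have hseq := seq_tendsto p.1 hcpx
    have hseq' : Filter.Tendsto (fun _ : ℕ => (0:ℝ)) Filter.atTop (nhds (px η (p.1, 1))) := by
      have hfe : (fun n : ℕ => px η (p.1, 1 - 1/((n:ℝ)+2))) = fun _ : ℕ => (0:ℝ) :=
        funext hzero'
      rw [← hfe]
      exact hseq
    have hlim : px η (p.1, 1) = 0 :=
      tendsto_nhds_unique hseq' tendsto_const_nhds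
    have := htop p.1 hp1
    linarith
  · -- point on the top boundary
    have hp : p = (p.1, 1) := by rw [← heq]
    rw [hp]
    exact htop p.1 hp1
end
end
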